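/- arXiv:2601.17358 — 9 statements merged into one kernel-verified Lean document; each statement's English description precedes it below -/
import Mathlib

section
/- For every positive integer n, ∫₀¹ dr/√(1-r^(2n)) = 2^(1/n) · ∫₀¹ (1-x^(2n))^(1/(2n)) dx. -/
open Real intervalIntegral MeasureTheory Set

private lemma beta_eqOn {a b x : ℝ} (h0 : (0:ℝ) ≤ x) (hx1 : x ≤ 1) :
    ((x ^ (a - 1) * (1 - x) ^ (b - 1) : ℝ) : ℂ)
      = (x : ℂ) ^ ((a : ℂ) - 1) * (1 - (x : ℂ)) ^ ((b : ℂ) - 1) := by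
  have h1 : (0:ℝ) ≤ 1 - x := by linarith
  rw [show ((a:ℂ) - 1) = ((a - 1 : ℝ) : ℂ) by push_cast; ring,
    show ((b:ℂ) - 1) = ((b - 1 : ℝ) : ℂ) by push_cast; ring,
    show (1 - (x:ℂ)) = ((1 - x : ℝ) : ℂ) by push_cast; ring,
    ← Complex.ofReal_cpow h0, ← Complex.ofReal_cpow h1, ← Complex.ofReal_mul]

private lemma betaIntegrable {a b : ℝ} (ha : 0 < a) (hb : 0 < b) :
    IntervalIntegrable (fun x : ℝ => x ^ (a - 1) * (1 - x) ^ (b - 1))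
      MeasureTheory.volume 0 1 := by
  have hc := Complex.betaIntegral_convergent (u := (a:ℂ)) (v := (b:ℂ))
    (by simpa using ha) (by simpa using hb)
  constructor
  · have h1 : MeasureTheory.IntegrableOn
        (fun x : ℝ => (((x:ℂ) ^ ((a:ℂ) - 1) * (1 - (x:ℂ)) ^ ((b:ℂ) - 1)).re))
        (Set.Ioc (0:ℝ) 1) := hc.1.re
    refine h1.congr_fun (fun x hx => ?_) measurableSet_Ioc
    beta_reduce
    rw [← beta_eqOn hx.1.le hx.2]
    simp
  · rw [Set.Ioc_eq_empty (by norm_num)]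
    exact MeasureTheory.integrableOn_empty

private lemma betaR {a b : ℝ} (ha : 0 < a) (hb : 0 < b) :
    ∫ x in (0:ℝ)..1, x ^ (a - 1) * (1 - x) ^ (b - 1)
      = Real.Gamma a * Real.Gamma b / Real.Gamma (a + b) := by
  have h := Complex.Gamma_mul_Gamma_eq_betaIntegral (s := (a:ℂ)) (t := (b:ℂ))
    (by simpa using ha) (by simpa using hb)
  have hbeta : Complex.betaIntegral a b
      = ((∫ x in (0:ℝ)..1, x ^ (a - 1) * (1 - x) ^ (b - 1) : ℝ) : ℂ) := by
    rw [Complex.betaIntegral, ← intervalIntegral.integral_ofReal]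
    refine (intervalIntegral.integral_congr (fun x hx => ?_)).symm
    rw [Set.uIcc_of_le (by norm_num : (0:ℝ) ≤ 1)] at hx
    exact beta_eqOn hx.1 hx.2
  have hG : 0 < Real.Gamma (a + b) := Real.Gamma_pos_of_pos (by linarith)
  have key : Real.Gamma a * Real.Gamma b
      = Real.Gamma (a + b) * ∫ x in (0:ℝ)..1, x ^ (a - 1) * (1 - x) ^ (b - 1) := by
    have : ((Real.Gamma a * Real.Gamma b : ℝ) : ℂ)
        = ((Real.Gamma (a + b) * ∫ x in (0:ℝ)..1, x ^ (a - 1) * (1 - x) ^ (b - 1) : ℝ) : ℂ) := by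
      push_cast
      rw [← Complex.Gamma_ofReal, ← Complex.Gamma_ofReal, ← Complex.Gamma_ofReal, ← hbeta]
      push_cast
      exact h
    exact_mod_cast this
  rw [eq_div_iff hG.ne']
  linarith [key]

private lemma subst_rpow {s : ℝ} (hs0 : 0 < s) {g G : ℝ → ℝ}
    (hgG : ∀ u ∈ Set.Icc (0:ℝ) 1, g (u ^ s) * (s * u ^ (s - 1)) = G u)
    (hg_cont : ContinuousOn g (Set.Ioo 0 1))
    (hg1 : MeasureTheory.IntegrableOn g (Set.Icc 0 1))
    (hg2 : MeasureTheory.IntegrableOn G (Set.Icc 0 1)) :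
    ∫ r in (0:ℝ)..1, g r = ∫ u in (0:ℝ)..1, G u := by
  have h01 : (0:ℝ) ≤ 1 := by norm_num
  have himage : (fun u : ℝ => u ^ s) '' Set.Icc 0 1 ⊆ Set.Icc 0 1 := by
    rintro _ ⟨u, hu, rfl⟩
    exact ⟨Real.rpow_nonneg hu.1 s, Real.rpow_le_one hu.1 hu.2 hs0.le⟩
  have himageoo : (fun u : ℝ => u ^ s) '' Set.Ioo 0 1 ⊆ Set.Ioo 0 1 := by
    rintro _ ⟨u, hu, rfl⟩
    exact ⟨Real.rpow_pos_of_pos hu.1 s, Real.rpow_lt_one hu.1.le hu.2 hs0⟩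
  have h := intervalIntegral.integral_comp_mul_deriv'''
    (f := fun u : ℝ => u ^ s) (f' := fun u : ℝ => s * u ^ (s - 1)) (g := g)
    (a := 0) (b := 1)
    ?_ ?_ ?_ ?_ ?_
  · rw [Real.zero_rpow hs0.ne', Real.one_rpow] at h
    rw [← h]
    refine intervalIntegral.integral_congr fun u hu => ?_
    rw [Set.uIcc_of_le h01] at hu
    exact hgG u hu
  · -- continuity of u ↦ u ^ s
    refine ContinuousOn.rpow_const continuousOn_id fun x _ => Or.inr hs0.le
  · intro x hx
    have hx' : x ∈ Set.Ioo (0:ℝ) 1 := by simpa using hx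
    exact (Real.hasDerivAt_rpow_const (Or.inl hx'.1.ne')).hasDerivWithinAt
  · refine hg_cont.mono ?_
    refine _root_.trans ?_ himageoo
    apply Set.image_mono
    intro x hx
    simpa using hx
  · apply hg1.mono_set
    refine _root_.trans ?_ himage
    apply Set.image_mono
    rw [Set.uIcc_of_le h01]
  · rw [Set.uIcc_of_le h01]
    exact hg2.congr_fun (fun u hu => (hgG u hu).symm) measurableSet_Icc

theorem stmt0 (n : ℕ) (hn : 0 < n) :
    ∫ r in (0:ℝ)..1, 1 / Real.sqrt (1 - r ^ (2 * n)) =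
      (2:ℝ) ^ ((1:ℝ) / n) * ∫ x in (0:ℝ)..1, (1 - x ^ (2 * n)) ^ ((1:ℝ) / (2 * n)) := by
  have hn' : (0:ℝ) < n := by exact_mod_cast hn
  have h01 : (0:ℝ) ≤ 1 := by norm_num
  set s : ℝ := 1 / (2 * (n:ℝ)) with hs
  have hs0 : 0 < s := by rw [hs]; positivity
  have hkn : 1 ≤ 2 * n := by omega
  have hkey : ∀ u ∈ Set.Icc (0:ℝ) 1, (u ^ s) ^ (2 * n) = u := by
    intro u hu
    rw [← Real.rpow_natCast (u ^ s) (2 * n), ← Real.rpow_mul hu.1]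
    rw [show s * ((2 * n : ℕ) : ℝ) = 1 by rw [hs]; push_cast; field_simp]
    exact Real.rpow_one u
  -- nonnegativity of 1 - r^(2n) on [0,1]
  have hbase : ∀ r ∈ Set.Icc (0:ℝ) 1, 0 ≤ 1 - r ^ (2 * n) := by
    intro r hr
    have := pow_le_one₀ hr.1 hr.2 (n := 2 * n)
    linarith
  -- integrability of the LHS integrand on [0,1]
  have hint_bound : MeasureTheory.IntegrableOn (fun r : ℝ => (1 - r) ^ (-(1/2) : ℝ))
      (Set.Icc (0:ℝ) 1) := by
    have h := betaIntegrable (a := 1) (b := 1/2) one_pos (by norm_num)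
    have h' : MeasureTheory.IntegrableOn
        (fun x : ℝ => x ^ ((1:ℝ) - 1) * (1 - x) ^ ((1/2:ℝ) - 1)) (Set.Icc 0 1) := by
      rw [integrableOn_Icc_iff_integrableOn_Ioc]
      exact h.1
    refine h'.congr_fun (fun x hx => ?_) measurableSet_Icc
    norm_num
  have hintL : MeasureTheory.IntegrableOn
      (fun r : ℝ => (1 - r ^ (2 * n)) ^ (-(1/2) : ℝ)) (Set.Icc (0:ℝ) 1) := by
    refine hint_bound.mono' ?_ ?_
    · exact ((measurable_const.sub (measurable_id.pow_const (2 * n))).pow_const (-(1/2):ℝ)).aestronglyMeasurable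
    · filter_upwards [MeasureTheory.ae_restrict_mem measurableSet_Icc] with r hr
      have h0 : 0 ≤ 1 - r ^ (2 * n) := hbase r hr
      rw [Real.norm_of_nonneg (Real.rpow_nonneg h0 _)]
      rcases eq_or_lt_of_le hr.2 with h1 | h1
      · subst h1
        norm_num
      · have hlt : 0 < 1 - r := by linarith
        have hle : 1 - r ≤ 1 - r ^ (2 * n) := by
          have h2 : r ^ (2 * n) ≤ r ^ 1 := pow_le_pow_of_le_one hr.1 hr.2 hkn
          rw [pow_one] at h2
          linarith
        exact Real.rpow_le_rpow_of_nonpos hlt hle (by norm_num)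
  -- continuity of LHS integrand on (0,1)
  have hcontL : ContinuousOn (fun r : ℝ => (1 - r ^ (2 * n)) ^ (-(1/2) : ℝ)) (Set.Ioo 0 1) := by
    refine ContinuousOn.rpow_const ((continuous_const.sub (continuous_pow _)).continuousOn)
      fun r hr => Or.inl ?_
    have : r ^ (2 * n) < 1 := pow_lt_one₀ hr.1.le hr.2 (by omega)
    exact ne_of_gt (by linarith)
  -- RHS integrand continuous everywhere
  have hcontR : Continuous (fun x : ℝ => (1 - x ^ (2 * n)) ^ s) := by
    rw [continuous_iff_continuousAt]
    intro x
    exact (Real.continuousAt_rpow_const _ s (Or.inr hs0.le)).comp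
      ((continuous_const.sub (continuous_pow _)).continuousAt)
  -- beta-integrand integrabilities
  have hbetaL : MeasureTheory.IntegrableOn
      (fun u : ℝ => s * (u ^ (s - 1) * (1 - u) ^ ((1/2:ℝ) - 1))) (Set.Icc (0:ℝ) 1) := by
    rw [integrableOn_Icc_iff_integrableOn_Ioc]
    exact ((betaIntegrable hs0 (by norm_num : (0:ℝ) < 1/2)).1.const_mul s)
  have hbetaR : MeasureTheory.IntegrableOn
      (fun u : ℝ => s * (u ^ (s - 1) * (1 - u) ^ ((s + 1) - 1))) (Set.Icc (0:ℝ) 1) := by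
    rw [integrableOn_Icc_iff_integrableOn_Ioc]
    exact ((betaIntegrable hs0 (by linarith : (0:ℝ) < s + 1)).1.const_mul s)
  -- LHS computation
  have hL : (∫ r in (0:ℝ)..1, 1 / Real.sqrt (1 - r ^ (2 * n)))
      = s * (Real.Gamma s * Real.Gamma (1/2) / Real.Gamma (s + 1/2)) := by
    have e1 : (∫ r in (0:ℝ)..1, 1 / Real.sqrt (1 - r ^ (2 * n)))
        = ∫ r in (0:ℝ)..1, (1 - r ^ (2 * n)) ^ (-(1/2) : ℝ) := by
      refine intervalIntegral.integral_congr fun r hr => ?_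
      rw [Set.uIcc_of_le h01] at hr
      rw [Real.rpow_neg (hbase r hr), ← Real.sqrt_eq_rpow, one_div]
    have e2 := subst_rpow hs0 (g := fun r : ℝ => (1 - r ^ (2 * n)) ^ (-(1/2) : ℝ))
      (G := fun u : ℝ => s * (u ^ (s - 1) * (1 - u) ^ ((1/2:ℝ) - 1)))
      (fun u hu => by
        rw [hkey u hu, show ((1/2:ℝ) - 1) = -(1/2) by norm_num]
        ring)
      hcontL hintL hbetaL
    rw [e1, e2, intervalIntegral.integral_const_mul,
      betaR hs0 (by norm_num : (0:ℝ) < 1/2)]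
  -- RHS computation
  have hR : (∫ x in (0:ℝ)..1, (1 - x ^ (2 * n)) ^ s)
      = s * (Real.Gamma s * Real.Gamma (s + 1) / Real.Gamma (s + (s + 1))) := by
    have e2 := subst_rpow hs0 (g := fun x : ℝ => (1 - x ^ (2 * n)) ^ s)
      (G := fun u : ℝ => s * (u ^ (s - 1) * (1 - u) ^ ((s + 1) - 1)))
      (fun u hu => by
        rw [hkey u hu, show (s + 1 - 1 : ℝ) = s by ring]
        ring)
      hcontR.continuousOn hcontR.integrableOn_Icc hbetaR
    rw [e2, intervalIntegral.integral_const_mul,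
      betaR hs0 (by linarith : (0:ℝ) < s + 1)]
  rw [hL, hR]
  have h2s : (1:ℝ) / n = 2 * s := by rw [hs]; field_simp
  rw [h2s]
  have hA := Real.Gamma_pos_of_pos hs0
  have hB := Real.Gamma_pos_of_pos (by linarith : (0:ℝ) < s + 1/2)
  have hC := Real.Gamma_pos_of_pos (by linarith : (0:ℝ) < 2 * s)
  have hdup := Real.Gamma_mul_Gamma_add_half s
  rw [show s + (s + 1) = 2 * s + 1 by ring,
    Real.Gamma_add_one (by positivity : (2 * s) ≠ 0),
    Real.Gamma_add_one hs0.ne', Real.Gamma_one_half_eq]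
  have h2 : (2:ℝ) ^ (2 * s) * (2:ℝ) ^ (1 - 2 * s) = 2 := by
    rw [← Real.rpow_add two_pos]
    norm_num
  have hpi : 0 < Real.sqrt π := Real.sqrt_pos.mpr Real.pi_pos
  set A := Real.Gamma s with hAdef
  set B := Real.Gamma (s + 1/2) with hBdef
  set C := Real.Gamma (2 * s) with hCdef
  set P := Real.sqrt π with hPdef
  set T := (2:ℝ) ^ (2 * s) with hTdef
  set U := (2:ℝ) ^ (1 - 2 * s) with hUdef
  field_simp
  linear_combination (-T) * hdup + (-(C * P)) * h2
end

section
/- For every real α > 0, ∫₀¹ dr/√(1-r^α) = 2^(2/α) · ∫₀¹ (1-x^α)^(1/α) dx. -/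
open Real MeasureTheory Set intervalIntegral
open scoped Interval


lemma betaInt_integrable {s t : ℝ} (hs : 0 < s) (ht : 0 < t) :
    IntervalIntegrable (fun x : ℝ => x ^ (s-1) * (1-x) ^ (t-1)) volume 0 1 := by
  have hcont : ∀ u : ℝ, u ≠ 0 → ∀ r : ℝ, ContinuousAt (fun x : ℝ => (1 - x) ^ r) u →
      True := fun _ _ _ _ => trivial
  have h1 : IntervalIntegrable (fun x : ℝ => x ^ (s-1) * (1-x) ^ (t-1)) volume 0 (1/2) := by
    apply (intervalIntegral.intervalIntegrable_rpow' (by linarith)).mul_continuousOn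
    intro x hx
    rw [uIcc_of_le (by norm_num)] at hx
    have : (1:ℝ) - x ≠ 0 := by
      have := hx.2; intro h; nlinarith [hx.1]
    exact ((Real.continuousAt_rpow_const _ _ (Or.inl this)).comp
      ((continuous_const.sub continuous_id).continuousAt)).continuousWithinAt
  have h2' : IntervalIntegrable (fun x : ℝ => (1-x) ^ (t-1)) volume (1/2) 1 := by
    have := (intervalIntegral.intervalIntegrable_rpow' (a := 1/2) (b := 0) (r := t-1)
      (by linarith)).comp_sub_left 1
    norm_num at this
    convert this using 2
  have h2 : IntervalIntegrable (fun x : ℝ => x ^ (s-1) * (1-x) ^ (t-1)) volume (1/2) 1 := by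
    apply h2'.continuousOn_mul
    intro x hx
    rw [uIcc_of_le (by norm_num)] at hx
    have : x ≠ 0 := by have := hx.1; intro h; norm_num [h] at this
    exact (Real.continuousAt_rpow_const _ _ (Or.inl this)).continuousWithinAt
  exact h1.trans h2

lemma betaInt_eq {s t : ℝ} (hs : 0 < s) (ht : 0 < t) :
    Real.Gamma s * Real.Gamma t =
      Real.Gamma (s+t) * ∫ x in (0:ℝ)..1, x ^ (s-1) * (1-x) ^ (t-1) := by
  have hC := Complex.Gamma_mul_Gamma_eq_betaIntegral (s := (s:ℂ)) (t := (t:ℂ))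
    (by simpa using hs) (by simpa using ht)
  have hbeta : Complex.betaIntegral (s:ℂ) (t:ℂ) =
      ((∫ x in (0:ℝ)..1, x ^ (s-1) * (1-x) ^ (t-1) : ℝ) : ℂ) := by
    rw [Complex.betaIntegral, ← intervalIntegral.integral_ofReal]
    apply intervalIntegral.integral_congr
    intro x hx
    rw [uIcc_of_le zero_le_one] at hx
    have h1x : (0:ℝ) ≤ 1 - x := by linarith [hx.2]
    dsimp only
    rw [Complex.ofReal_mul, Complex.ofReal_cpow hx.1, Complex.ofReal_cpow h1x]
    push_cast
    ring
  rw [hbeta, ← Complex.ofReal_add s t, Complex.Gamma_ofReal, Complex.Gamma_ofReal,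
    Complex.Gamma_ofReal, ← Complex.ofReal_mul, ← Complex.ofReal_mul] at hC
  exact_mod_cast hC



lemma point_eq {α : ℝ} (hα : 0 < α) {x : ℝ} (hx : 0 < x) (p : ℝ) :
    (α * x ^ (α-1)) * ((1/α) * ((x ^ α) ^ (1/α-1) * (1 - x ^ α) ^ p)) = (1 - x ^ α) ^ p := by
  have e1 : (x ^ α) ^ (1/α-1) = x ^ (1-α) := by
    rw [← Real.rpow_mul hx.le]
    congr 1
    field_simp
  have e2 : x ^ (α-1) * x ^ (1-α) = 1 := by
    rw [← Real.rpow_add hx]; norm_num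
  have hαne : α ≠ 0 := hα.ne'
  have e3 : (α * x ^ (α-1)) * ((1/α) * (x ^ (1-α) * (1 - x ^ α) ^ p)) =
      (α * (1/α)) * ((x ^ (α-1) * x ^ (1-α)) * (1 - x ^ α) ^ p) := by ring
  rw [e1, e3, e2, mul_one_div_cancel hαne, one_mul, one_mul]

lemma subst_lemma {α : ℝ} (hα : 0 < α) (p : ℝ)
    (hInt : IntervalIntegrable (fun x : ℝ => (1 - x ^ α) ^ p) volume 0 1)
    (hBeta : IntervalIntegrable (fun u : ℝ => u ^ (1/α-1) * (1-u) ^ p) volume 0 1) :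
    ∫ x in (0:ℝ)..1, (1 - x ^ α) ^ p =
      (1/α) * ∫ u in (0:ℝ)..1, u ^ (1/α-1) * (1-u) ^ p := by
  set g : ℝ → ℝ := fun u => (1/α) * (u ^ (1/α-1) * (1-u) ^ p) with hg
  have himg : ∀ x ∈ Icc (0:ℝ) 1, x ^ α ∈ Icc (0:ℝ) 1 := fun x hx =>
    ⟨Real.rpow_nonneg hx.1 _, Real.rpow_le_one hx.1 hx.2 hα.le⟩
  have hf : ContinuousOn (fun x : ℝ => x ^ α) [[0, 1]] := fun x _ =>
    (Real.continuousAt_rpow_const x α (Or.inr hα.le)).continuousWithinAt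
  have hff' : ∀ x ∈ Ioo (min (0:ℝ) 1) (max 0 1),
      HasDerivWithinAt (fun x : ℝ => x ^ α) (α * x ^ (α-1)) (Ioi x) x := by
    intro x hx
    rw [min_def, max_def] at hx
    norm_num at hx
    exact (Real.hasDerivAt_rpow_const (Or.inl hx.1.ne')).hasDerivWithinAt
  have hg_cont : ContinuousOn g ((fun x : ℝ => x ^ α) '' Ioo (min (0:ℝ) 1) (max 0 1)) := by
    have hsub : (fun x : ℝ => x ^ α) '' Ioo (min (0:ℝ) 1) (max 0 1) ⊆ Ioo 0 1 := by
      rintro _ ⟨x, hx, rfl⟩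
      rw [min_def, max_def] at hx
      norm_num at hx
      exact ⟨Real.rpow_pos_of_pos hx.1 _, Real.rpow_lt_one hx.1.le hx.2 hα⟩
    refine ContinuousOn.mono ?_ hsub
    intro u hu
    have h1 : u ≠ 0 := hu.1.ne'
    have h2 : (1:ℝ) - u ≠ 0 := by have := hu.2; intro h; nlinarith
    exact (continuousAt_const.mul ((Real.continuousAt_rpow_const _ _ (Or.inl h1)).mul
      ((Real.continuousAt_rpow_const _ _ (Or.inl h2)).comp
        ((continuous_const.sub continuous_id).continuousAt)))).continuousWithinAt
  have hg1 : IntegrableOn g ((fun x : ℝ => x ^ α) '' [[0, 1]]) := by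
    have : IntegrableOn g (Icc (0:ℝ) 1) := by
      rw [← intervalIntegrable_iff_integrableOn_Icc_of_le zero_le_one]
      exact hBeta.const_mul (1/α)
    refine this.mono_set ?_
    rintro _ ⟨x, hx, rfl⟩
    rw [uIcc_of_le zero_le_one] at hx
    exact himg x hx
  have hae0 : ∀ᵐ (x : ℝ), x ≠ 0 := by
    rw [ae_iff]
    convert Real.volume_singleton (a := 0) using 2
    ext x; simp
  have hg2 : IntegrableOn (fun x => (α * x ^ (α-1)) • (g ∘ (fun x : ℝ => x ^ α)) x) [[0, 1]] := by
    rw [uIcc_of_le zero_le_one]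
    have hI : IntegrableOn (fun x : ℝ => (1 - x ^ α) ^ p) (Icc (0:ℝ) 1) := by
      rw [← intervalIntegrable_iff_integrableOn_Icc_of_le zero_le_one]
      exact hInt
    refine hI.congr_fun_ae ?_
    filter_upwards [ae_restrict_mem measurableSet_Icc, ae_restrict_of_ae hae0] with x hx hx0
    have hx' : 0 < x := lt_of_le_of_ne hx.1 (Ne.symm hx0)
    simp only [Function.comp, hg, smul_eq_mul]
    exact (point_eq hα hx' p).symm
  have key := intervalIntegral.integral_comp_smul_deriv''' (a := 0) (b := 1) hf hff'
    hg_cont hg1 hg2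
  rw [Real.zero_rpow hα.ne', Real.one_rpow] at key
  have lhs_eq : ∫ x in (0:ℝ)..1, (1 - x ^ α) ^ p =
      ∫ x in (0:ℝ)..1, (α * x ^ (α-1)) • (g ∘ (fun x : ℝ => x ^ α)) x := by
    apply intervalIntegral.integral_congr_ae'
    · apply Filter.Eventually.of_forall
      intro x hx
      simp only [Function.comp, hg, smul_eq_mul]
      exact (point_eq hα hx.1 p).symm
    · simp
  rw [lhs_eq, key]
  exact intervalIntegral.integral_const_mul (1/α) (fun u : ℝ => u ^ (1/α-1) * (1-u) ^ p)



lemma claim_min {α : ℝ} (hα : 0 < α) {x : ℝ} (hx : x ∈ Icc (0:ℝ) 1) :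
    min 1 α * (1 - x) ≤ 1 - x ^ α := by
  rcases le_total α 1 with h | h
  · have hb := rpow_one_add_le_one_add_mul_self (s := x - 1)
      (by linarith [hx.1]) hα.le h
    have hx1 : (1:ℝ) + (x - 1) = x := by ring
    rw [hx1] at hb
    have hmin : min 1 α = α := min_eq_right h
    rw [hmin]
    nlinarith
  · have hxα : x ^ α ≤ x := by
      rcases eq_or_lt_of_le hx.1 with h0 | h0
      · rw [← h0, Real.zero_rpow hα.ne']
      · calc x ^ α ≤ x ^ (1:ℝ) := Real.rpow_le_rpow_of_exponent_ge h0 hx.2 h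
          _ = x := Real.rpow_one x
    have hmin : min 1 α = 1 := min_eq_left h
    rw [hmin]
    nlinarith [hx.2]

lemma fact2 {α : ℝ} (hα : 0 < α) :
    IntervalIntegrable (fun x : ℝ => (1 - x ^ α) ^ (-(1/2) : ℝ)) volume 0 1 := by
  set c := min 1 α with hc
  have hc0 : 0 < c := lt_min one_pos hα
  have hdom : IntervalIntegrable (fun x : ℝ => c ^ (-(1/2):ℝ) * (1-x) ^ (-(1/2):ℝ))
      volume 0 1 := by
    have := (intervalIntegral.intervalIntegrable_rpow' (a := 1) (b := 0) (r := -(1/2))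
      (by norm_num)).comp_sub_left 1
    norm_num at this
    exact this.const_mul _
  apply hdom.mono_fun'
  · have hm : Measurable fun x : ℝ => (1 - x ^ α) ^ (-(1/2):ℝ) :=
      (measurable_const.sub (measurable_id.pow measurable_const)).pow measurable_const
    exact hm.aestronglyMeasurable
  · rw [uIoc_of_le zero_le_one]
    filter_upwards [ae_restrict_mem measurableSet_Ioc] with x hx
    have hx1 : x ^ α ≤ 1 := Real.rpow_le_one hx.1.le hx.2 hα.le
    have hnn : (0:ℝ) ≤ 1 - x ^ α := by linarith
    simp only [Real.norm_eq_abs, abs_of_nonneg (Real.rpow_nonneg hnn _)]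
    rcases eq_or_lt_of_le hx.2 with h1 | h1
    · subst h1
      simp [Real.one_rpow, Real.zero_rpow (by norm_num : (-(1/2):ℝ) ≠ 0)]
    · have hpos : 0 < c * (1 - x) := mul_pos hc0 (by linarith)
      have hle := claim_min hα ⟨hx.1.le, hx.2⟩
      calc (1 - x ^ α) ^ (-(1/2):ℝ) ≤ (c * (1 - x)) ^ (-(1/2):ℝ) :=
            Real.rpow_le_rpow_of_nonpos hpos hle (by norm_num)
        _ = c ^ (-(1/2):ℝ) * (1-x) ^ (-(1/2):ℝ) := Real.mul_rpow hc0.le (by linarith)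

lemma fact1 {α : ℝ} (hα : 0 < α) :
    IntervalIntegrable (fun x : ℝ => (1 - x ^ α) ^ ((1:ℝ)/α)) volume 0 1 := by
  have hinner : Continuous fun x : ℝ => 1 - x ^ α := by
    rw [continuous_iff_continuousAt]
    intro x
    exact continuousAt_const.sub (Real.continuousAt_rpow_const x α (Or.inr hα.le))
  have hcont : Continuous fun x : ℝ => (1 - x ^ α) ^ ((1:ℝ)/α) := by
    rw [continuous_iff_continuousAt]
    intro x
    exact (Real.continuousAt_rpow_const _ _ (Or.inr (by positivity))).comp hinner.continuousAt
  exact hcont.intervalIntegrable 0 1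


open Real

theorem stmt1 (α : ℝ) (hα : 0 < α) :
    ∫ r in (0:ℝ)..1, 1 / Real.sqrt (1 - r ^ α) =
      (2:ℝ) ^ ((2:ℝ) / α) * ∫ x in (0:ℝ)..1, (1 - x ^ α) ^ ((1:ℝ) / α) := by
  have hs : 0 < 1/α := by positivity
  -- Step A : rewrite the left side with rpow
  have stepA : ∫ r in (0:ℝ)..1, 1 / Real.sqrt (1 - r ^ α)
      = ∫ r in (0:ℝ)..1, (1 - r ^ α) ^ (-(1/2) : ℝ) := by
    apply intervalIntegral.integral_congr
    intro x hx
    rw [uIcc_of_le zero_le_one] at hx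
    have hnn : (0:ℝ) ≤ 1 - x ^ α := by
      have := Real.rpow_le_one hx.1 hx.2 hα.le
      linarith
    dsimp only
    rw [Real.rpow_neg hnn, ← Real.sqrt_eq_rpow, one_div]
  -- beta integrability inputs
  have hBeta1 : IntervalIntegrable (fun u : ℝ => u ^ (1/α-1) * (1-u) ^ (-(1/2):ℝ))
      volume 0 1 := by
    have h := betaInt_integrable (s := 1/α) (t := 1/2) hs (by norm_num)
    rw [show ((1:ℝ)/2 - 1) = -(1/2) by norm_num] at h
    exact h
  have hBeta2 : IntervalIntegrable (fun u : ℝ => u ^ (1/α-1) * (1-u) ^ ((1:ℝ)/α))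
      volume 0 1 := by
    have h := betaInt_integrable (s := 1/α) (t := 1/α + 1) hs (by positivity)
    rw [show ((1:ℝ)/α + 1 - 1) = 1/α by ring] at h
    exact h
  have sub1 := subst_lemma hα (-(1/2)) (fact2 hα) hBeta1
  have sub2 := subst_lemma hα ((1:ℝ)/α) (fact1 hα) hBeta2
  rw [stepA, sub1, sub2]
  -- now pure Beta/Gamma computation
  set s := 1/α with hsdef
  set B₁ := ∫ u in (0:ℝ)..1, u ^ (s-1) * (1-u) ^ (-(1/2):ℝ) with hB1
  set B₂ := ∫ u in (0:ℝ)..1, u ^ (s-1) * (1-u) ^ ((1:ℝ)/α) with hB2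
  have hA := betaInt_eq (s := s) (t := 1/2) hs (by norm_num)
  have hB := betaInt_eq (s := s) (t := s + 1) hs (by positivity)
  rw [show ((1:ℝ)/2 - 1) = -(1/2) by norm_num] at hA
  rw [show (s + 1 - 1) = s by ring] at hB
  rw [show (s + (s+1)) = 2*s + 1 by ring] at hB
  rw [Real.Gamma_one_half_eq] at hA
  rw [Real.Gamma_add_one hs.ne'] at hB
  rw [Real.Gamma_add_one (by positivity : 2*s ≠ 0)] at hB
  rw [← hB1] at hA
  have hBs : (∫ x in (0:ℝ)..1, x ^ (s-1) * (1-x) ^ s) = B₂ := by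
    rw [hB2, hsdef]
  rw [hBs] at hB
  have dup := Real.Gamma_mul_Gamma_add_half s
  have h2s : (2:ℝ)/α = 2*s := by rw [hsdef]; ring
  rw [h2s]
  have h4 : (2:ℝ) ^ (2*s) * (2:ℝ) ^ (1-2*s) = 2 := by
    rw [← Real.rpow_add two_pos]; norm_num
  have hG1 : 0 < Real.Gamma s := Real.Gamma_pos_of_pos hs
  have hG2 : 0 < Real.Gamma (s + 1/2) := Real.Gamma_pos_of_pos (by positivity)
  have hG3 : 0 < Real.Gamma (2*s) := Real.Gamma_pos_of_pos (by positivity)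
  have hπ : 0 < Real.sqrt π := Real.sqrt_pos.mpr pi_pos
  suffices hBB : B₁ = (2:ℝ) ^ (2*s) * B₂ by rw [hBB]; ring
  have h1 : B₁ = Real.Gamma s * Real.sqrt π / Real.Gamma (s + 1/2) := by
    rw [eq_div_iff hG2.ne']
    linear_combination -hA
  have h2 : B₂ = s * Real.Gamma s ^ 2 / (2 * s * Real.Gamma (2*s)) := by
    rw [eq_div_iff (by positivity)]
    linear_combination -hB
  rw [h1, h2, ← mul_div_assoc, div_eq_div_iff hG2.ne' (by positivity)]
  linear_combination (-(((2:ℝ)^(2*s)) * s * Real.Gamma s)) * dup -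
    (s * Real.Gamma s * Real.Gamma (2*s) * Real.sqrt π) * h4
end

section
/- Let α > 0 and a, b > 0. The area of the region {(x,y) : |x/a|^α + |y/b|^α ≤ 1} equals 2^(1-2/α) · ϖ_α · a · b, where ϖ_α = 2·∫₀¹ dr/√(1-r^α). -/
open Real MeasureTheory

lemma realBeta {p q : ℝ} (hp : -1 < p) (hq : -1 < q) :
    ∫ x in (0:ℝ)..1, x ^ p * (1-x) ^ q =
      Real.Gamma (p+1) * Real.Gamma (q+1) / Real.Gamma (p+q+2) := by
  have hp1 : (0:ℝ) < p + 1 := by linarith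
  have hq1 : (0:ℝ) < q + 1 := by linarith
  have hb := Complex.Gamma_mul_Gamma_eq_betaIntegral
    (s := ((p+1 : ℝ) : ℂ)) (t := ((q+1:ℝ) : ℂ)) (by simpa using hp1) (by simpa using hq1)
  have hbeta : Complex.betaIntegral ((p+1:ℝ):ℂ) ((q+1:ℝ):ℂ)
      = ((∫ x in (0:ℝ)..1, x ^ p * (1-x) ^ q : ℝ) : ℂ) := by
    rw [Complex.betaIntegral, ← intervalIntegral.integral_ofReal]
    apply intervalIntegral.integral_congr
    intro x hx
    simp only [Set.uIcc_of_le (zero_le_one' ℝ), Set.mem_Icc] at hx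
    have hx0 : (0:ℝ) ≤ x := hx.1
    have hx1 : (0:ℝ) ≤ 1 - x := by linarith [hx.2]
    show (x:ℂ) ^ (((p+1:ℝ):ℂ)-1) * ((1:ℂ)-(x:ℝ)) ^ (((q+1:ℝ):ℂ)-1) = _
    rw [show ((p+1:ℝ):ℂ) - 1 = ((p:ℝ):ℂ) by push_cast; ring,
      show ((q+1:ℝ):ℂ) - 1 = ((q:ℝ):ℂ) by push_cast; ring,
      show ((1:ℂ) - (x:ℝ)) = (((1 - x : ℝ)):ℂ) by push_cast; ring,
      ← Complex.ofReal_cpow hx0, ← Complex.ofReal_cpow hx1]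
    push_cast
    ring
  rw [hbeta, Complex.Gamma_ofReal, Complex.Gamma_ofReal,
    show ((p+1:ℝ):ℂ) + ((q+1:ℝ):ℂ) = ((p+q+2:ℝ):ℂ) by push_cast; ring,
    Complex.Gamma_ofReal, ← Complex.ofReal_mul, ← Complex.ofReal_mul] at hb
  have h := Complex.ofReal_inj.mp hb
  have hΓ : Real.Gamma (p+q+2) ≠ 0 := (Real.Gamma_pos_of_pos (by linarith)).ne'
  field_simp
  linarith [h]

lemma subst_rpow_s8 {α : ℝ} (hα : 0 < α) (c : ℝ) :
    ∫ r in (0:ℝ)..1, (1 - r ^ α) ^ c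
      = (1/α) * ∫ t in (0:ℝ)..1, t ^ (1/α - 1) * (1 - t) ^ c := by
  have himg : (fun t : ℝ => t ^ (1/α)) '' Set.Ioo 0 1 = Set.Ioo 0 1 := by
    ext r
    constructor
    · rintro ⟨t, ht, rfl⟩
      exact ⟨Real.rpow_pos_of_pos ht.1 _,
        Real.rpow_lt_one ht.1.le ht.2 (by positivity)⟩
    · intro hr
      refine ⟨r ^ α, ⟨Real.rpow_pos_of_pos hr.1 _,
        Real.rpow_lt_one hr.1.le hr.2 hα⟩, ?_⟩
      show (r ^ α) ^ (1/α) = r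
      rw [one_div, Real.rpow_rpow_inv hr.1.le hα.ne']
  have hderiv : ∀ t ∈ Set.Ioo (0:ℝ) 1,
      HasDerivWithinAt (fun t : ℝ => t ^ (1/α)) ((1/α) * t ^ (1/α - 1)) (Set.Ioo 0 1) t :=
    fun t ht => (Real.hasDerivAt_rpow_const (Or.inl ht.1.ne')).hasDerivWithinAt
  have hinj : Set.InjOn (fun t : ℝ => t ^ (1/α)) (Set.Ioo 0 1) := by
    intro x hx y hy h
    have := congrArg (fun s : ℝ => s ^ α) h
    simpa [one_div, Real.rpow_inv_rpow hx.1.le hα.ne',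
      Real.rpow_inv_rpow hy.1.le hα.ne'] using this
  have key := integral_image_eq_integral_abs_deriv_smul measurableSet_Ioo hderiv hinj
    (fun r => (1 - r ^ α) ^ c)
  rw [himg] at key
  rw [intervalIntegral.integral_of_le zero_le_one, MeasureTheory.integral_Ioc_eq_integral_Ioo,
    key, intervalIntegral.integral_of_le zero_le_one, MeasureTheory.integral_Ioc_eq_integral_Ioo,
    ← MeasureTheory.integral_const_mul]
  apply MeasureTheory.setIntegral_congr_fun measurableSet_Ioo
  intro t ht
  have h1 : (t ^ (1/α)) ^ α = t := by
    rw [one_div, Real.rpow_inv_rpow ht.1.le hα.ne']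
  have h2 : (0:ℝ) < (1/α) * t ^ (1/α - 1) := by
    have := Real.rpow_pos_of_pos ht.1 (1/α - 1); positivity
  simp only [smul_eq_mul, h1, abs_of_pos h2]
  ring



lemma key_identity {α : ℝ} (hα : 0 < α) :
    ∫ x in (0:ℝ)..1, (1 - x ^ α) ^ (1/α)
      = (2:ℝ) ^ (-(2/α)) * ∫ r in (0:ℝ)..1, (1 - r ^ α) ^ (-(1/2) : ℝ) := by
  have hu : (0:ℝ) < 1/α := by positivity
  rw [subst_rpow_s8 hα (1/α), subst_rpow_s8 hα (-(1/2) : ℝ),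
    realBeta (by linarith) (by linarith : (-1:ℝ) < 1/α),
    realBeta (by linarith) (by norm_num : (-1:ℝ) < -(1/2))]
  rw [show (1:ℝ)/α - 1 + 1 = 1/α by ring, show (1:ℝ)/α - 1 + 1/α + 2 = 2/α + 1 by ring,
    show (1:ℝ)/α - 1 + -(1/2) + 2 = 1/α + 1/2 by ring, show (-((1:ℝ)/2) + 1 : ℝ) = 1/2 by ring]
  rw [Real.Gamma_add_one hu.ne', Real.Gamma_add_one (by positivity : (2:ℝ)/α ≠ 0),
    Real.Gamma_one_half_eq]
  have hdup := Real.Gamma_mul_Gamma_add_half (1/α)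
  rw [show (2:ℝ) * (1/α) = 2/α by ring,
    show (1:ℝ) - 2/α = 1 + (-(2/α)) by ring,
    Real.rpow_add two_pos, Real.rpow_one] at hdup
  rw [show (2:ℝ)/α = 2*(1/α) by ring] at hdup ⊢
  have hG : (0:ℝ) < Real.Gamma (1/α) := Real.Gamma_pos_of_pos hu
  have hH : (0:ℝ) < Real.Gamma (1/α + 1/2) := Real.Gamma_pos_of_pos (by positivity)
  have hK : (0:ℝ) < Real.Gamma (2*(1/α)) := Real.Gamma_pos_of_pos (by positivity)
  have hP : (0:ℝ) < (2:ℝ) ^ (-(2*(1/α))) := Real.rpow_pos_of_pos two_pos _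
  have hs : (0:ℝ) < Real.sqrt π := Real.sqrt_pos.mpr Real.pi_pos
  generalize Real.Gamma (1/α) = G at *
  generalize Real.Gamma (1/α + 1/2) = H at *
  generalize Real.Gamma (2*(1/α)) = K at *
  generalize ((2:ℝ) ^ (-(2*(1/α))) : ℝ) = P at *
  generalize (Real.sqrt π : ℝ) = s at *
  generalize (1/α : ℝ) = u at *
  field_simp
  linear_combination hdup


theorem stmt8 (α a b : ℝ) (hα : 0 < α) (ha : 0 < a) (hb : 0 < b) :
    (volume {p : ℝ × ℝ | |p.1 / a| ^ α + |p.2 / b| ^ α ≤ 1}).toReal =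
      (2:ℝ) ^ ((1:ℝ) - 2 / α) * (2 * ∫ r in (0:ℝ)..1, 1 / Real.sqrt (1 - r ^ α)) * a * b := by
  set S := {p : ℝ × ℝ | |p.1 / a| ^ α + |p.2 / b| ^ α ≤ 1} with hSdef
  have hcont2 : Continuous fun p : ℝ × ℝ => |p.1 / a| ^ α + |p.2 / b| ^ α :=
    (((continuous_fst.div_const a).abs).rpow_const fun x => Or.inr hα.le).add
      (((continuous_snd.div_const b).abs).rpow_const fun x => Or.inr hα.le)
  have hSm : MeasurableSet S := (isClosed_le hcont2 continuous_const).measurableSet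
  set f : ℝ → ℝ := fun x => 2*b*(1 - |x/a|^α)^(1/α) with hf
  have hfc : Continuous f := by
    apply Continuous.mul continuous_const
    exact (continuous_const.sub ((continuous_id.div_const a).abs.rpow_const
      fun x => Or.inr hα.le)).rpow_const fun x => Or.inr (by positivity)
  have hnn : ∀ x ∈ Set.Icc (-a) a, 0 ≤ f x := by
    intro x hx
    have h1 : |x/a| ≤ 1 := by
      rw [abs_div, abs_of_pos ha, div_le_one ha]; exact abs_le.mpr hx
    have hs0 : (0:ℝ) ≤ 1 - |x/a|^α := by
      have := Real.rpow_le_one (abs_nonneg _) h1 hα.le; linarith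
    have h2 := Real.rpow_nonneg hs0 (1/α)
    simp only [hf]; positivity
  have hslice : ∀ x : ℝ,
      volume (Prod.mk x ⁻¹' S) = (Set.Icc (-a) a).indicator (fun t => ENNReal.ofReal (f t)) x := by
    intro x
    by_cases hx : x ∈ Set.Icc (-a) a
    · rw [Set.indicator_of_mem hx]
      have hxa : |x| ≤ a := abs_le.mpr hx
      have h1 : |x/a| ≤ 1 := by rw [abs_div, abs_of_pos ha, div_le_one ha]; exact hxa
      have hs0 : (0:ℝ) ≤ 1 - |x/a|^α := by
        have := Real.rpow_le_one (abs_nonneg _) h1 hα.le; linarith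
      have hset : Prod.mk x ⁻¹' S
          = Set.Icc (-(b*(1-|x/a|^α)^(1/α))) (b*(1-|x/a|^α)^(1/α)) := by
        ext y
        simp only [hSdef, Set.mem_preimage, Set.mem_setOf_eq, Set.mem_Icc, ← abs_le]
        constructor
        · intro h
          have h2 : |y/b|^α ≤ ((1-|x/a|^α)^(1/α))^α := by
            rw [one_div, Real.rpow_inv_rpow hs0 hα.ne']; linarith
          have h3 : |y/b| ≤ (1-|x/a|^α)^(1/α) :=
            (Real.rpow_le_rpow_iff (abs_nonneg _) (Real.rpow_nonneg hs0 _) hα).mp h2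
          rw [abs_div, abs_of_pos hb, div_le_iff₀ hb] at h3
          linarith [h3]
        · intro h
          have h3 : |y/b| ≤ (1-|x/a|^α)^(1/α) := by
            rw [abs_div, abs_of_pos hb, div_le_iff₀ hb]; linarith
          have h2 : |y/b|^α ≤ 1-|x/a|^α := by
            have := Real.rpow_le_rpow (abs_nonneg _) h3 hα.le
            rwa [one_div, Real.rpow_inv_rpow hs0 hα.ne'] at this
          linarith
      rw [hset, Real.volume_Icc]
      congr 1
      simp only [hf]; ring
    · rw [Set.indicator_of_notMem hx]
      have hxa : a < |x| := by
        by_contra hcon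
        exact hx (abs_le.mp (not_lt.mp hcon))
      have hempty : Prod.mk x ⁻¹' S = ∅ := by
        ext y
        simp only [hSdef, Set.mem_preimage, Set.mem_setOf_eq, Set.mem_empty_iff_false,
          iff_false]
        intro h
        have h1 : 1 < |x/a| := by
          rw [abs_div, abs_of_pos ha, lt_div_iff₀ ha]; linarith
        have h2 : 1 < |x/a|^α :=
          (Real.one_lt_rpow_iff_of_pos (by linarith)).mpr (Or.inl ⟨h1, hα⟩)
        have h3 : 0 ≤ |y/b|^α := Real.rpow_nonneg (abs_nonneg _) _
        linarith
      rw [hempty]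
      simp
  have hint : IntegrableOn f (Set.Icc (-a) a) volume := hfc.integrableOn_Icc
  have hae : 0 ≤ᵐ[volume.restrict (Set.Icc (-a) a)] f :=
    (ae_restrict_iff' measurableSet_Icc).mpr (Filter.Eventually.of_forall hnn)
  have h1 : volume S = ENNReal.ofReal (∫ x in Set.Icc (-a) a, f x) := by
    rw [MeasureTheory.Measure.volume_eq_prod, MeasureTheory.Measure.prod_apply hSm]
    simp_rw [hslice]
    rw [lintegral_indicator measurableSet_Icc,
      ← MeasureTheory.ofReal_integral_eq_lintegral_ofReal hint hae]
  have h2 : (volume S).toReal = ∫ x in Set.Icc (-a) a, f x := by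
    rw [h1, ENNReal.toReal_ofReal (MeasureTheory.setIntegral_nonneg measurableSet_Icc hnn)]
  have h3 : ∫ x in Set.Icc (-a) a, f x = ∫ x in (-a)..a, f x := by
    rw [MeasureTheory.integral_Icc_eq_integral_Ioc,
      ← intervalIntegral.integral_of_le (by linarith : -a ≤ a)]
  have heven : ∀ x, f (-x) = f x := by
    intro x; simp only [hf, neg_div, abs_neg]
  have h4 : ∫ x in (-a)..a, f x = 2 * ∫ x in (0:ℝ)..a, f x := by
    have hi1 : IntervalIntegrable f volume (-a) 0 := hfc.intervalIntegrable _ _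
    have hi2 : IntervalIntegrable f volume 0 a := hfc.intervalIntegrable _ _
    rw [← intervalIntegral.integral_add_adjacent_intervals hi1 hi2]
    have hneg : ∫ x in (-a)..(0:ℝ), f x = ∫ x in (0:ℝ)..a, f x := by
      have hc := intervalIntegral.integral_comp_neg (a := (0:ℝ)) (b := a) f
      rw [neg_zero] at hc
      rw [← hc]
      exact intervalIntegral.integral_congr fun x _ => heven x
    rw [hneg]; ring
  have h5 : ∫ x in (0:ℝ)..a, f x
      = a * ∫ u in (0:ℝ)..1, 2*b*(1-|u|^α)^(1/α) := by
    have := intervalIntegral.integral_comp_div (a := (0:ℝ)) (b := a)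
      (c := a) (f := fun u => 2*b*(1-|u|^α)^(1/α)) ha.ne'
    rw [zero_div, div_self ha.ne', smul_eq_mul] at this
    exact this
  have h6 : ∫ u in (0:ℝ)..1, 2*b*(1-|u|^α)^(1/α)
      = 2*b* ∫ u in (0:ℝ)..1, (1-u^α)^(1/α) := by
    rw [← intervalIntegral.integral_const_mul]
    apply intervalIntegral.integral_congr
    intro u hu
    simp only [Set.uIcc_of_le (zero_le_one' ℝ), Set.mem_Icc] at hu
    show 2*b*(1-|u|^α)^(1/α) = 2*b*(1-u^α)^(1/α)
    rw [abs_of_nonneg hu.1]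
  have h7 : ∫ r in (0:ℝ)..1, 1 / Real.sqrt (1 - r ^ α)
      = ∫ r in (0:ℝ)..1, (1 - r ^ α) ^ (-(1/2) : ℝ) := by
    apply intervalIntegral.integral_congr
    intro r hr
    simp only [Set.uIcc_of_le (zero_le_one' ℝ), Set.mem_Icc] at hr
    have hs0 : (0:ℝ) ≤ 1 - r ^ α := by
      have := Real.rpow_le_one hr.1 hr.2 hα.le; linarith
    show 1 / Real.sqrt (1 - r ^ α) = (1 - r ^ α) ^ (-(1/2) : ℝ)
    rw [Real.sqrt_eq_rpow, one_div, ← Real.rpow_neg hs0]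
  have hkey := key_identity (α := α) hα
  have hpow : (2:ℝ) ^ ((1:ℝ) - 2/α) = 2 * (2:ℝ) ^ (-(2/α)) := by
    rw [show (1:ℝ) - 2/α = 1 + (-(2/α)) by ring, Real.rpow_add two_pos, Real.rpow_one]
  rw [h2, h3, h4, h5, h6, h7, hkey, hpow]
  ring
end

section
/- Let n be a positive real number, 0 ≤ T ≤ 1, and R ∈ [0,1] with R^n = 2T^n/(1+T^(2n)). Then ∫₀^R dr/√(1-r^(2n)) = 2^(1/n) · ∫₀^T dv/(1+v^(2n))^(1/n). -/
open Real MeasureTheory Set intervalIntegral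

/-- Lower bound `min p 1 * (1 - r) ≤ 1 - r ^ p` for `r ∈ [0,1]`. -/
lemma stmt9_aux_lb {p : ℝ} (hp : 0 < p) {r : ℝ} (hr0 : 0 ≤ r) (hr1 : r ≤ 1) :
    min p 1 * (1 - r) ≤ 1 - r ^ p := by
  rcases le_or_gt 1 p with h1 | h1
  · have hmin : min p 1 = 1 := min_eq_right h1
    rcases eq_or_lt_of_le hr0 with h | h
    · rw [← h, Real.zero_rpow hp.ne', hmin]; norm_num
    · have : r ^ p ≤ r ^ (1:ℝ) := Real.rpow_le_rpow_of_exponent_ge h hr1 h1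
      rw [Real.rpow_one] at this
      rw [hmin]; linarith
  · have hmin : min p 1 = p := min_eq_left h1.le
    have hb := rpow_one_add_le_one_add_mul_self (s := r - 1) (by linarith) hp.le h1.le
    have : (1 + (r - 1)) = r := by ring
    rw [this] at hb
    rw [hmin]; nlinarith

/-- Integrability of `1 / √(1 - r^p)` on `[0,1]`. -/
lemma stmt9_aux_int {p : ℝ} (hp : 0 < p) :
    IntervalIntegrable (fun r : ℝ => 1 / Real.sqrt (1 - r ^ p)) volume 0 1 := by
  have hc : (0:ℝ) < min p 1 := lt_min hp one_pos
  have hbound : IntervalIntegrable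
      (fun r : ℝ => (1 / Real.sqrt (min p 1)) * (1 - r) ^ (-(1/2) : ℝ)) volume 0 1 := by
    have h0 : IntervalIntegrable (fun x : ℝ => x ^ (-(1/2) : ℝ)) volume 0 1 :=
      intervalIntegrable_rpow' (by norm_num)
    have h1 := (h0.comp_sub_left 1).const_mul (1 / Real.sqrt (min p 1))
    simpa using h1.symm
  refine hbound.mono_fun ?_ ?_
  · have hcont : Continuous fun r : ℝ => r ^ p := Real.continuous_rpow_const hp.le
    exact (measurable_const.div
      (Real.continuous_sqrt.comp (continuous_const.sub hcont)).measurable).aestronglyMeasurable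
  · filter_upwards [ae_restrict_mem measurableSet_uIoc] with x hx
    rw [uIoc_of_le (zero_le_one)] at hx
    obtain ⟨hx0, hx1⟩ := hx
    have hf0 : 0 ≤ 1 / Real.sqrt (1 - x ^ p) := by positivity
    have hg0 : 0 ≤ (1 / Real.sqrt (min p 1)) * (1 - x) ^ (-(1/2) : ℝ) := by
      have : (0:ℝ) ≤ 1 - x := by linarith
      positivity
    rw [Real.norm_eq_abs, Real.norm_eq_abs, abs_of_nonneg hf0, abs_of_nonneg hg0]
    rcases eq_or_lt_of_le hx1 with rfl | hx1'
    · rw [Real.one_rpow, sub_self, Real.sqrt_zero, Real.zero_rpow (by norm_num)]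
      simp
    · have hle : min p 1 * (1 - x) ≤ 1 - x ^ p := stmt9_aux_lb hp hx0.le hx1
      have h3 : 0 < Real.sqrt (min p 1 * (1 - x)) := by
        apply Real.sqrt_pos.mpr; have : (0:ℝ) < 1 - x := by linarith
        positivity
      calc 1 / Real.sqrt (1 - x ^ p) ≤ 1 / Real.sqrt (min p 1 * (1 - x)) :=
            one_div_le_one_div_of_le h3 (Real.sqrt_le_sqrt hle)
        _ = (1 / Real.sqrt (min p 1)) * (1 - x) ^ (-(1/2) : ℝ) := by
            rw [Real.sqrt_mul hc.le, Real.rpow_neg (by linarith), ← Real.sqrt_eq_rpow,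
              one_div, mul_inv, one_div]

theorem stmt9 (n T R : ℝ) (hn : 0 < n) (hT0 : 0 ≤ T) (hT1 : T ≤ 1)
    (hR0 : 0 ≤ R) (hR1 : R ≤ 1) (hR : R ^ n = 2 * T ^ n / (1 + T ^ (2 * n))) :
    ∫ r in (0:ℝ)..R, 1 / Real.sqrt (1 - r ^ (2 * n)) =
      (2:ℝ) ^ ((1:ℝ) / n) * ∫ v in (0:ℝ)..T, 1 / (1 + v ^ (2 * n)) ^ ((1:ℝ) / n) := by
  have hp : (0:ℝ) < 2 * n := by linarith
  set g : ℝ → ℝ := fun r => 1 / Real.sqrt (1 - r ^ (2 * n)) with hg_def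
  set φ : ℝ → ℝ := fun v => 2 ^ ((1:ℝ)/n) * v * (1 + v ^ (2*n)) ^ (-((1:ℝ)/n)) with hφ_def
  set φ' : ℝ → ℝ := fun v =>
    2 ^ ((1:ℝ)/n) * ((1 - v ^ (2*n)) * (1 + v ^ (2*n)) ^ (-((1:ℝ)/n) - 1)) with hφ'_def
  have hpos : ∀ v : ℝ, 0 ≤ v → (0:ℝ) < 1 + v ^ (2*n) := by
    intro v hv
    have := Real.rpow_nonneg hv (2*n); linarith
  -- squares
  have hsq : ∀ v : ℝ, 0 ≤ v → v ^ (2*n) = (v ^ n) ^ (2:ℕ) := by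
    intro v hv
    rw [← Real.rpow_natCast (v ^ n) 2, ← Real.rpow_mul hv]
    norm_num; ring_nf
  -- φ v ^ n
  have hφn : ∀ v : ℝ, 0 ≤ v → φ v ^ n = 2 * v ^ n / (1 + v ^ (2*n)) := by
    intro v hv
    have h1 : (0:ℝ) < 1 + v ^ (2*n) := hpos v hv
    have e1 : ((2:ℝ) ^ ((1:ℝ)/n)) ^ n = 2 := by
      rw [← Real.rpow_mul (by norm_num : (0:ℝ) ≤ 2), one_div, inv_mul_cancel₀ hn.ne',
        Real.rpow_one]
    have e2 : (((1:ℝ) + v ^ (2*n)) ^ (-((1:ℝ)/n))) ^ n = (1 + v ^ (2*n))⁻¹ := by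
      rw [← Real.rpow_mul h1.le, show (-((1:ℝ)/n)) * n = -1 by field_simp,
        Real.rpow_neg_one]
    have hA : (0:ℝ) ≤ (2:ℝ) ^ ((1:ℝ)/n) := Real.rpow_nonneg (by norm_num) _
    calc φ v ^ n
        = ((2:ℝ) ^ ((1:ℝ)/n)) ^ n * v ^ n * (((1:ℝ) + v ^ (2*n)) ^ (-((1:ℝ)/n))) ^ n := by
          rw [hφ_def]
          rw [Real.mul_rpow (by positivity) (Real.rpow_nonneg h1.le _),
            Real.mul_rpow hA hv]
      _ = 2 * v ^ n / (1 + v ^ (2*n)) := by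
          rw [e1, e2, div_eq_mul_inv]
  have hφ0 : φ 0 = 0 := by simp [hφ_def]
  have hφnonneg : ∀ v : ℝ, 0 ≤ v → 0 ≤ φ v := by
    intro v hv
    have : (0:ℝ) ≤ (1 + v ^ (2*n)) ^ (-((1:ℝ)/n)) := Real.rpow_nonneg (hpos v hv).le _
    have hA : (0:ℝ) ≤ (2:ℝ) ^ ((1:ℝ)/n) := Real.rpow_nonneg (by norm_num) _
    rw [hφ_def]; positivity
  -- φ T = R
  have hφT : φ T = R := by
    have h1 : φ T ^ n = R ^ n := by rw [hφn T hT0, hR]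
    have hφTn : 0 ≤ φ T := hφnonneg T hT0
    rcases lt_trichotomy (φ T) R with h | h | h
    · exact absurd h1 (ne_of_lt (Real.rpow_lt_rpow hφTn h hn))
    · exact h
    · exact absurd h1.symm (ne_of_lt (Real.rpow_lt_rpow hR0 h hn))
  -- bounds on φ
  have hφle : ∀ v : ℝ, 0 ≤ v → v ≤ 1 → φ v ≤ 1 := by
    intro v hv hv1
    have hs1 : v ^ n ≤ 1 := Real.rpow_le_one hv hv1 hn.le
    have hs0 : 0 ≤ v ^ n := Real.rpow_nonneg hv n
    have h1 : φ v ^ n ≤ 1 := by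
      rw [hφn v hv, div_le_one (hpos v hv), hsq v hv]
      nlinarith
    by_contra hlt
    push_neg at hlt
    have : (1:ℝ) < φ v ^ n := by
      have := Real.rpow_lt_rpow (zero_le_one) hlt hn
      rwa [Real.one_rpow] at this
    linarith
  have hφlt : ∀ v : ℝ, 0 ≤ v → v < 1 → φ v < 1 := by
    intro v hv hv1
    have hs1 : v ^ n < 1 := Real.rpow_lt_one hv hv1 hn
    have hs0 : 0 ≤ v ^ n := Real.rpow_nonneg hv n
    have h1 : φ v ^ n < 1 := by
      rw [hφn v hv, div_lt_one (hpos v hv), hsq v hv]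
      nlinarith
    by_contra hlt
    push_neg at hlt
    have : (1:ℝ) ≤ φ v ^ n := by
      have := Real.rpow_le_rpow (zero_le_one) hlt hn.le
      rwa [Real.one_rpow] at this
    linarith
  -- derivative
  have hderiv : ∀ v ∈ Ioo (0:ℝ) T, HasDerivAt φ (φ' v) v := by
    intro v hv
    have hv0 : (0:ℝ) < v := hv.1
    have hvpos : (0:ℝ) < 1 + v ^ (2*n) := hpos v hv0.le
    have h1 : HasDerivAt (fun x : ℝ => x ^ (2*n)) (2*n * v ^ (2*n - 1)) v :=
      Real.hasDerivAt_rpow_const (Or.inl hv0.ne')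
    have h2 : HasDerivAt (fun x : ℝ => 1 + x ^ (2*n)) (2*n * v ^ (2*n - 1)) v :=
      h1.const_add 1
    have h3 := h2.rpow_const (p := -((1:ℝ)/n)) (Or.inl hvpos.ne')
    have h4 : HasDerivAt (fun x : ℝ => (2:ℝ) ^ ((1:ℝ)/n) * x) ((2:ℝ) ^ ((1:ℝ)/n) * 1) v :=
      (hasDerivAt_id v).const_mul _
    have h5 := h4.mul h3
    have e1 : v ^ (2*n - 1) = v ^ (2*n) / v := by
      rw [Real.rpow_sub hv0, Real.rpow_one]
    have e2 : (1 + v ^ (2*n)) ^ (-((1:ℝ)/n))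
        = (1 + v ^ (2*n)) ^ (-((1:ℝ)/n) - 1) * (1 + v ^ (2*n)) := by
      rw [← Real.rpow_add_one hvpos.ne']
      norm_num
    refine h5.congr_deriv ?_
    rw [e1, e2]
    set A := (1 + v ^ (2*n)) ^ (-((1:ℝ)/n) - 1) with hA
    set B := v ^ (2*n) with hB
    field_simp
    ring
  -- continuity of φ
  have hφcont : ContinuousOn φ (Set.uIcc (0:ℝ) T) := by
    rw [Set.uIcc_of_le hT0]
    have c1 : ContinuousOn (fun v : ℝ => v ^ (2*n)) (Icc 0 T) :=
      (Real.continuous_rpow_const hp.le).continuousOn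
    have c2 : ContinuousOn (fun v : ℝ => ((1:ℝ) + v ^ (2*n)) ^ (-((1:ℝ)/n))) (Icc 0 T) :=
      (continuousOn_const.add c1).rpow_const fun x hx => Or.inl (hpos x hx.1).ne'
    exact (continuousOn_const.mul continuousOn_id).mul c2
  -- continuity of g on [0,1)
  have hgc : ContinuousOn g (Ico (0:ℝ) 1) := by
    apply ContinuousOn.div continuousOn_const
    · exact (Real.continuous_sqrt.comp
        (continuous_const.sub (Real.continuous_rpow_const hp.le))).continuousOn
    · intro x hx
      have hxp : x ^ (2*n) < 1 := Real.rpow_lt_one hx.1 hx.2 hp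
      have : (0:ℝ) < 1 - x ^ (2*n) := by linarith
      exact (Real.sqrt_pos.mpr this).ne'
  -- key pointwise identity
  have hkey : ∀ v : ℝ, 0 ≤ v → v < 1 →
      g (φ v) * φ' v = 2 ^ ((1:ℝ)/n) * (1 + v ^ (2*n)) ^ (-((1:ℝ)/n)) := by
    intro v hv hv1
    have hvpos : (0:ℝ) < 1 + v ^ (2*n) := hpos v hv
    have hs1 : v ^ n < 1 := Real.rpow_lt_one hv hv1 hn
    have hs0 : 0 ≤ v ^ n := Real.rpow_nonneg hv n
    have hsv : v ^ (2*n) = (v ^ n) ^ (2:ℕ) := hsq v hv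
    set s : ℝ := v ^ n with hs_def
    have hφv : (φ v) ^ (2*n) = ((φ v) ^ n) ^ (2:ℕ) := hsq (φ v) (hφnonneg v hv)
    have hφvn : φ v ^ n = 2 * s / (1 + s ^ (2:ℕ)) := by
      rw [hφn v hv, hsv]
    have hden : (0:ℝ) < 1 + s ^ (2:ℕ) := by rw [← hsv]; exact hvpos
    have hnum : (0:ℝ) < 1 - s ^ (2:ℕ) := by nlinarith
    have h1 : 1 - (φ v) ^ (2*n) = ((1 - s ^ (2:ℕ)) / (1 + s ^ (2:ℕ))) ^ (2:ℕ) := by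
      rw [hφv, hφvn]
      field_simp
      ring
    have h2 : Real.sqrt (1 - (φ v) ^ (2*n)) = (1 - s ^ (2:ℕ)) / (1 + s ^ (2:ℕ)) := by
      rw [h1, Real.sqrt_sq (by positivity)]
    have e2 : (1 + v ^ (2*n)) ^ (-((1:ℝ)/n) - 1)
        = (1 + v ^ (2*n)) ^ (-((1:ℝ)/n)) * (1 + v ^ (2*n))⁻¹ := by
      rw [show -((1:ℝ)/n) - 1 = -((1:ℝ)/n) + (-1) by ring, Real.rpow_add hvpos,
        Real.rpow_neg_one]
    rw [hg_def, hφ'_def]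
    simp only []
    rw [h2, e2, hsv]
    field_simp
  -- integrability of g on the image
  have hg1 : IntegrableOn g (φ '' Set.uIcc (0:ℝ) T) := by
    have hsub : φ '' Set.uIcc (0:ℝ) T ⊆ Icc 0 1 := by
      rintro _ ⟨v, hv, rfl⟩
      rw [Set.uIcc_of_le hT0] at hv
      exact ⟨hφnonneg v hv.1, hφle v hv.1 (hv.2.trans hT1)⟩
    have hint : IntegrableOn g (Icc (0:ℝ) 1) := by
      have := stmt9_aux_int hp
      rwa [intervalIntegrable_iff', Set.uIcc_of_le zero_le_one] at this
    exact hint.mono_set hsub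
  -- a.e. statement that v ≠ 1
  have hne1 : ∀ᵐ v : ℝ ∂volume, v ≠ 1 := by
    rw [MeasureTheory.ae_iff]
    have : {v : ℝ | ¬ v ≠ 1} = {1} := by ext v; simp
    rw [this]
    exact Real.volume_singleton
  -- integrability of the substituted integrand
  have hhcont : ContinuousOn
      (fun v : ℝ => 2 ^ ((1:ℝ)/n) * (1 + v ^ (2*n)) ^ (-((1:ℝ)/n))) (Icc 0 T) := by
    have c1 : ContinuousOn (fun v : ℝ => v ^ (2*n)) (Icc 0 T) :=
      (Real.continuous_rpow_const hp.le).continuousOn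
    exact continuousOn_const.mul
      ((continuousOn_const.add c1).rpow_const fun x hx => Or.inl (hpos x hx.1).ne')
  have hg2 : IntegrableOn (fun x => (g ∘ φ) x * φ' x) (Set.uIcc (0:ℝ) T) := by
    rw [Set.uIcc_of_le hT0]
    refine (hhcont.integrableOn_Icc).congr ?_
    filter_upwards [ae_restrict_mem measurableSet_Icc,
      hne1.filter_mono (ae_mono Measure.restrict_le_self)] with v hv hvne
    have hvlt : v < 1 := lt_of_le_of_ne (hv.2.trans hT1) hvne
    exact (hkey v hv.1 hvlt).symm
  -- the change of variables
  have hmin : min (0:ℝ) T = 0 := min_eq_left hT0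
  have hmax : max (0:ℝ) T = T := max_eq_right hT0
  have hcov := intervalIntegral.integral_comp_mul_deriv''' (a := 0) (b := T)
    (f := φ) (f' := φ') (g := g) hφcont
    (by
      rw [hmin, hmax]
      intro x hx
      exact (hderiv x hx).hasDerivWithinAt)
    (by
      rw [hmin, hmax]
      refine hgc.mono ?_
      rintro _ ⟨v, hv, rfl⟩
      exact ⟨hφnonneg v hv.1.le, hφlt v hv.1.le (lt_of_lt_of_le hv.2 hT1)⟩)
    hg1 hg2
  rw [hφ0, hφT] at hcov
  rw [← hcov]
  -- now rewrite the integrand a.e.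
  have heq : ∫ x in (0:ℝ)..T, (g ∘ φ) x * φ' x
      = ∫ v in (0:ℝ)..T, 2 ^ ((1:ℝ)/n) * (1 + v ^ (2*n)) ^ (-((1:ℝ)/n)) := by
    apply intervalIntegral.integral_congr_ae
    filter_upwards [hne1] with v hvne hv
    rw [Set.uIoc_of_le hT0] at hv
    have hvlt : v < 1 := lt_of_le_of_ne (hv.2.trans hT1) hvne
    exact hkey v hv.1.le hvlt
  rw [heq]
  have heq2 : ∫ v in (0:ℝ)..T, 2 ^ ((1:ℝ)/n) * (1 + v ^ (2*n)) ^ (-((1:ℝ)/n))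
      = ∫ v in (0:ℝ)..T, 2 ^ ((1:ℝ)/n) * (1 / (1 + v ^ (2*n)) ^ ((1:ℝ)/n)) := by
    apply intervalIntegral.integral_congr
    intro v hv
    rw [Set.uIcc_of_le hT0] at hv
    simp only [Real.rpow_neg (hpos v hv.1).le, one_div]
  rw [heq2, intervalIntegral.integral_const_mul]
end

section
/- Let n be a positive integer, 0 ≤ α ≤ π/4, T = tan(α), and β = (1/n)·arccos(2T^n/(1+T^(2n))). Then the arc length l of the sinusoidal spiral r^n = cos(nθ) over the polar sector β ≤ θ ≤ π/(2n) and the area a of the radial sector 0 ≤ θ ≤ α of the Lamé curve x^(2n)+y^(2n)=1 satisfy l = 2^(1+1/n)·a. -/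
open Real
open Set

noncomputable def sp (n : ℕ) (t : ℝ) : ℝ :=
  2 ^ ((1:ℝ)/n) * (t * (1 + t ^ (2*n)) ^ (-((1:ℝ)/n)))

noncomputable def sp' (n : ℕ) (t : ℝ) : ℝ :=
  2 ^ ((1:ℝ)/n) * ((1 - t ^ (2*n)) * (1 + t ^ (2*n)) ^ (-((1:ℝ)/n) - 1))

lemma sp_hasDerivAt (n : ℕ) (hn : 0 < n) (t : ℝ) : HasDerivAt (sp n) (sp' n t) t := by
  have he : (0:ℝ) ≤ t ^ (2*n) := (even_two_mul n).pow_nonneg t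
  have hu : (0:ℝ) < 1 + t ^ (2*n) := by linarith
  have hnn : (n:ℝ) ≠ 0 := Nat.cast_ne_zero.mpr hn.ne'
  have h1 : HasDerivAt (fun s : ℝ => 1 + s ^ (2*n)) ((2*n : ℕ) * t ^ (2*n - 1)) t := by
    simpa using (hasDerivAt_pow (2*n) t).const_add 1
  have h2 := h1.rpow_const (p := -((1:ℝ)/n)) (Or.inl hu.ne')
  have h3 := ((hasDerivAt_id t).mul h2).const_mul ((2:ℝ) ^ ((1:ℝ)/(n:ℝ)))
  convert h3 using 1
  · rfl
  · rfl
  · rfl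
  have hsplit : (1 + t^(2*n)) ^ (-((1:ℝ)/n)) =
      (1 + t^(2*n)) ^ (-((1:ℝ)/n) - 1) * (1 + t^(2*n)) := by
    rw [← Real.rpow_add_one hu.ne']
    congr 1
    ring
  have ht2 : t ^ (2*n) = t * t ^ (2*n - 1) := by
    rw [← pow_succ']
    congr 1
    omega
  rw [sp', hsplit, ht2]
  field_simp
  simp only [id, Nat.cast_mul, Nat.cast_ofNat]
  ring

lemma sp_pow (n : ℕ) (hn : 0 < n) (t : ℝ) : sp n t ^ n = 2 * t ^ n / (1 + t ^ (2*n)) := by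
  have he : (0:ℝ) ≤ t ^ (2*n) := (even_two_mul n).pow_nonneg t
  have hu : (0:ℝ) ≤ 1 + t ^ (2*n) := by linarith
  have hnn : (n:ℝ) ≠ 0 := Nat.cast_ne_zero.mpr hn.ne'
  rw [sp, mul_pow, mul_pow,
    ← Real.rpow_natCast ((2:ℝ) ^ ((1:ℝ)/n)) n,
    ← Real.rpow_natCast ((1 + t^(2*n)) ^ (-((1:ℝ)/n))) n,
    ← Real.rpow_mul (by norm_num : (0:ℝ) ≤ 2), ← Real.rpow_mul hu,
    show ((1:ℝ)/n) * n = 1 by field_simp,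
    show (-((1:ℝ)/n)) * n = -1 by field_simp,
    Real.rpow_one, Real.rpow_neg_one]
  rw [div_eq_mul_inv]
  ring

lemma sp_key (n : ℕ) (hn : 0 < n) (t : ℝ) (h0 : 0 < t) (h1 : t < 1) :
    |sp' n t| * (1 / Real.sqrt (1 - sp n t ^ (2*n))) =
      2 ^ ((1:ℝ)/n) * ((1 + t ^ (2*n)) ^ ((1:ℝ)/n))⁻¹ := by
  have hA0 : (0:ℝ) < t ^ (2*n) := pow_pos h0 _
  have hA1 : t ^ (2*n) < 1 := pow_lt_one₀ h0.le h1 (by omega)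
  have hu : (0:ℝ) < 1 + t ^ (2*n) := by linarith
  have htn : t ^ n * t ^ n = t ^ (2*n) := by rw [two_mul, pow_add]
  have hsp2 : sp n t ^ (2*n) = (2 * t ^ n / (1 + t ^ (2*n))) ^ 2 := by
    rw [two_mul, pow_add, ← sq, sp_pow n hn, ← two_mul]
  have h1m : 1 - sp n t ^ (2*n) = ((1 - t ^ (2*n)) / (1 + t ^ (2*n))) ^ 2 := by
    rw [hsp2]
    field_simp
    ring_nf
  have hsq : Real.sqrt (1 - sp n t ^ (2*n)) = (1 - t ^ (2*n)) / (1 + t ^ (2*n)) := by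
    rw [h1m, Real.sqrt_sq (div_nonneg (by linarith) hu.le)]
  have hpos : 0 < sp' n t := by
    rw [sp']
    exact mul_pos (Real.rpow_pos_of_pos two_pos _)
      (mul_pos (by linarith) (Real.rpow_pos_of_pos hu _))
  have h1A : (1:ℝ) - t ^ (2*n) ≠ 0 := by linarith
  rw [abs_of_pos hpos, hsq, sp', one_div_div, Real.rpow_sub hu, Real.rpow_one,
    Real.rpow_neg hu.le]
  field_simp

theorem stmt11 (n : ℕ) (hn : 0 < n) (α : ℝ) (hα0 : 0 ≤ α) (hα1 : α ≤ π / 4)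
    (T : ℝ) (hT : T = Real.tan α)
    (β : ℝ) (hβ : β = (1 / n) * Real.arccos (2 * T ^ n / (1 + T ^ (2 * n))))
    (R : ℝ) (hR0 : 0 ≤ R) (hRn : R ^ n = Real.cos (n * β))
    (l a : ℝ)
    (hl : l = ∫ r in (0:ℝ)..R, 1 / Real.sqrt (1 - r ^ (2 * n)))
    (ha : a = (1 / 2) * ∫ θ in (0:ℝ)..α,
        (1 / Real.cos θ) ^ 2 / (1 + Real.tan θ ^ (2 * n)) ^ ((1:ℝ) / n)) :
    l = (2:ℝ) ^ ((1:ℝ) + 1 / n) * a := by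
  have hnn : (n:ℝ) ≠ 0 := Nat.cast_ne_zero.mpr hn.ne'
  have hπ := Real.pi_pos
  have hT0 : 0 ≤ T := by
    rw [hT]; exact Real.tan_nonneg_of_nonneg_of_le_pi_div_two hα0 (by linarith)
  have hT1 : T ≤ 1 := by
    rw [hT, ← Real.tan_pi_div_four]
    exact Real.strictMonoOn_tan.monotoneOn ⟨by linarith, by linarith⟩
      ⟨by linarith, by linarith⟩ hα1
  have heT : (0:ℝ) ≤ T ^ (2*n) := (even_two_mul n).pow_nonneg T
  have hden : (0:ℝ) < 1 + T ^ (2*n) := by linarith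
  have hTn0 : 0 ≤ T ^ n := pow_nonneg hT0 n
  have htn2 : T ^ n * T ^ n = T ^ (2*n) := by rw [two_mul, pow_add]
  have hx0 : 0 ≤ 2 * T ^ n / (1 + T ^ (2*n)) := div_nonneg (by linarith) hden.le
  have hx1 : 2 * T ^ n / (1 + T ^ (2*n)) ≤ 1 := by
    rw [div_le_one hden]; nlinarith [sq_nonneg (1 - T ^ n)]
  have hspT : sp n T = R := by
    have h0 : 0 ≤ sp n T := by
      rw [sp]
      exact mul_nonneg (Real.rpow_nonneg (by norm_num) _)
        (mul_nonneg hT0 (Real.rpow_nonneg (by linarith) _))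
    refine (pow_left_inj₀ h0 hR0 hn.ne').mp ?_
    rw [sp_pow n hn, hRn, hβ,
      show (n:ℝ) * (1 / (n:ℝ) * Real.arccos (2 * T ^ n / (1 + T ^ (2*n)))) =
        Real.arccos (2 * T ^ n / (1 + T ^ (2*n))) by field_simp,
      Real.cos_arccos (by linarith) hx1]
  have hspcont : Continuous (sp n) :=
    continuous_iff_continuousAt.mpr fun t => (sp_hasDerivAt n hn t).continuousAt
  have hmono : StrictMonoOn (sp n) (Set.Icc 0 1) := by
    refine strictMonoOn_of_deriv_pos (convex_Icc 0 1) hspcont.continuousOn fun t ht => ?_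
    rw [interior_Icc] at ht
    rw [(sp_hasDerivAt n hn t).deriv, sp']
    have hA1 : t ^ (2*n) < 1 := pow_lt_one₀ ht.1.le ht.2 (by omega)
    have heA : (0:ℝ) ≤ t ^ (2*n) := (even_two_mul n).pow_nonneg t
    exact mul_pos (Real.rpow_pos_of_pos two_pos _)
      (mul_pos (by linarith) (Real.rpow_pos_of_pos (by linarith) _))
  have hsub : Set.Ioo (0:ℝ) T ⊆ Set.Icc (0:ℝ) 1 := fun t ht => ⟨ht.1.le, ht.2.le.trans hT1⟩
  have hsp0 : sp n 0 = 0 := by simp [sp]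
  have hTmem : T ∈ Set.Icc (0:ℝ) 1 := ⟨hT0, hT1⟩
  have h0mem : (0:ℝ) ∈ Set.Icc (0:ℝ) 1 := ⟨le_refl 0, by norm_num⟩
  have himg : sp n '' Set.Ioo 0 T = Set.Ioo 0 R := by
    apply Set.Subset.antisymm
    · rintro _ ⟨t, ht, rfl⟩
      refine ⟨?_, ?_⟩
      · have := hmono h0mem (hsub ht) ht.1
        rwa [hsp0] at this
      · have := hmono (hsub ht) hTmem ht.2
        rwa [hspT] at this
    · have := intermediate_value_Ioo hT0 (hspcont.continuousOn (s := Set.Icc 0 T))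
      rwa [hsp0, hspT] at this
  have hCoV := MeasureTheory.integral_image_eq_integral_abs_deriv_smul measurableSet_Ioo
      (fun t (_ : t ∈ Set.Ioo (0:ℝ) T) => (sp_hasDerivAt n hn t).hasDerivWithinAt)
      (hmono.injOn.mono hsub) (fun r => 1 / Real.sqrt (1 - r ^ (2*n)))
  rw [himg] at hCoV
  have hptw : ∀ t ∈ Set.Ioo (0:ℝ) T,
      |sp' n t| • (1 / Real.sqrt (1 - sp n t ^ (2*n))) =
      2 ^ ((1:ℝ)/n) * ((1 + t ^ (2*n)) ^ ((1:ℝ)/n))⁻¹ := fun t ht => by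
    rw [smul_eq_mul, sp_key n hn t ht.1 (lt_of_lt_of_le ht.2 hT1)]
  have hl2 : l = 2 ^ ((1:ℝ)/n) * ∫ u in (0:ℝ)..T, ((1 + u ^ (2*n)) ^ ((1:ℝ)/n))⁻¹ := by
    rw [hl, intervalIntegral.integral_of_le hR0, MeasureTheory.integral_Ioc_eq_integral_Ioo,
      hCoV, MeasureTheory.setIntegral_congr_fun measurableSet_Ioo hptw,
      intervalIntegral.integral_of_le hT0, MeasureTheory.integral_Ioc_eq_integral_Ioo,
      MeasureTheory.integral_const_mul]
  have hcosne : ∀ θ ∈ Set.uIcc (0:ℝ) α, Real.cos θ ≠ 0 := by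
    intro θ hθ
    rw [Set.uIcc_of_le hα0] at hθ
    exact (Real.cos_pos_of_mem_Ioo ⟨by linarith [hθ.1], by linarith [hθ.2]⟩).ne'
  have hFcont : Continuous (fun u : ℝ => ((1 + u ^ (2*n)) ^ ((1:ℝ)/n))⁻¹) := by
    refine Continuous.inv₀ ?_ fun u => ?_
    · exact (continuous_const.add (continuous_pow (2*n))).rpow_const fun u =>
        Or.inl (by have := (even_two_mul n).pow_nonneg (a := u) (R := ℝ); exact ne_of_gt (show (0:ℝ) < 1 + u ^ (2*n) by linarith))
    · have h := (even_two_mul n).pow_nonneg (a := u) (R := ℝ)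
      exact (Real.rpow_pos_of_pos (by linarith) _).ne'
  have hsubst := intervalIntegral.integral_comp_smul_deriv (a := (0:ℝ)) (b := α)
      (f := Real.tan) (f' := fun θ => 1 / Real.cos θ ^ 2)
      (fun θ hθ => Real.hasDerivAt_tan (hcosne θ hθ))
      (ContinuousOn.div continuousOn_const ((Real.continuous_cos.pow 2).continuousOn)
        fun θ hθ => pow_ne_zero 2 (hcosne θ hθ))
      hFcont
  rw [Real.tan_zero, ← hT] at hsubst
  have ha2 : a = (1/2) * ∫ u in (0:ℝ)..T, ((1 + u ^ (2*n)) ^ ((1:ℝ)/n))⁻¹ := by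
    rw [ha, ← hsubst]
    congr 1
    apply intervalIntegral.integral_congr
    intro θ hθ
    simp only [Function.comp, smul_eq_mul, div_pow, one_pow, div_eq_mul_inv]
    ring
  rw [hl2, ha2, Real.rpow_add two_pos, Real.rpow_one]
  ring
end

section
/- Let n ≥ 2 be an integer and let u(θ) = (cos^(2n)θ + sin^(2n)θ)^(1/(2n)). Then u satisfies u + u'' = (2n-1)·(sinθ·cosθ)^(2n-2) / u^(4n-1) for all θ with sinθ·cosθ ≠ 0 (and by continuity for all θ when n ≥ 2). -/
open Real

lemma aux_alg (k : ℕ) (s c : ℝ) (h : s ^ 2 + c ^ 2 = 1) :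
    (c ^ (k + 2) + s ^ (k + 2)) * (c ^ k * s ^ 2 + s ^ k * c ^ 2)
      - (c ^ (k + 1) * s - s ^ (k + 1) * c) ^ 2 = (s * c) ^ k := by
  have h2 : (s * c) ^ k * (s ^ 2 + c ^ 2) ^ 2 = (s * c) ^ k := by rw [h]; ring
  linear_combination h2

theorem stmt13 (n : ℕ) (hn : 2 ≤ n)
    (u : ℝ → ℝ)
    (hu : ∀ θ, u θ = (Real.cos θ ^ (2 * n) + Real.sin θ ^ (2 * n)) ^ ((1:ℝ) / (2 * n))) :
    ∀ θ : ℝ, u θ + deriv (deriv u) θ =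
      (2 * n - 1) * (Real.sin θ * Real.cos θ) ^ (2 * n - 2) / u θ ^ (4 * n - 1) := by
  intro θ
  have hufun : u = fun x => (Real.cos x ^ (2 * n) + Real.sin x ^ (2 * n)) ^ ((1:ℝ) / (2 * n)) :=
    funext hu
  subst hufun
  set m : ℕ := 2 * n with hmdef
  set p : ℝ := (1:ℝ) / (2 * n) with hpdef
  set f : ℝ → ℝ := fun x => Real.cos x ^ m + Real.sin x ^ m with hfdef
  have hfpos : ∀ x, 0 < f x := by
    intro x
    have hpyth := Real.sin_sq_add_cos_sq x
    have hme : Even m := ⟨n, by omega⟩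
    rcases eq_or_ne (Real.cos x) 0 with hc | hc
    · have hs : Real.sin x ≠ 0 := by
        intro hs; rw [hs, hc] at hpyth; norm_num at hpyth
      have h1 : 0 < Real.sin x ^ m := hme.pow_pos hs
      have h2 : 0 ≤ Real.cos x ^ m := hme.pow_nonneg _
      simp only [hfdef]; linarith
    · have h1 : 0 < Real.cos x ^ m := hme.pow_pos hc
      have h2 : 0 ≤ Real.sin x ^ m := hme.pow_nonneg _
      simp only [hfdef]; linarith
  set d1 : ℝ → ℝ := fun x =>
    ↑m * Real.cos x ^ (m - 1) * (-Real.sin x) + ↑m * Real.sin x ^ (m - 1) * Real.cos x with hd1def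
  have hfd : ∀ x, HasDerivAt f (d1 x) x := fun x =>
    (((Real.hasDerivAt_cos x).pow m).add ((Real.hasDerivAt_sin x).pow m))
  have hu1 : ∀ x, HasDerivAt (fun x => f x ^ p) (d1 x * p * f x ^ (p - 1)) x := fun x =>
    (hfd x).rpow_const (Or.inl (hfpos x).ne')
  have hderiv1 : deriv (fun x => f x ^ p) = fun x => d1 x * p * f x ^ (p - 1) :=
    funext fun x => (hu1 x).deriv
  -- second derivative of the inner pieces
  have hd1' : HasDerivAt d1
      ((↑m * (↑(m - 1) * Real.cos θ ^ (m - 1 - 1) * (-Real.sin θ)) * (-Real.sin θ)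
          + ↑m * Real.cos θ ^ (m - 1) * (-Real.cos θ))
        + (↑m * (↑(m - 1) * Real.sin θ ^ (m - 1 - 1) * Real.cos θ) * Real.cos θ
          + ↑m * Real.sin θ ^ (m - 1) * (-Real.sin θ))) θ := by
    exact ((((Real.hasDerivAt_cos θ).pow (m - 1)).const_mul (m:ℝ)).mul
        (Real.hasDerivAt_sin θ).neg).add
      ((((Real.hasDerivAt_sin θ).pow (m - 1)).const_mul (m:ℝ)).mul (Real.hasDerivAt_cos θ))
  set E1 : ℝ :=
      (↑m * (↑(m - 1) * Real.cos θ ^ (m - 1 - 1) * (-Real.sin θ)) * (-Real.sin θ)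
          + ↑m * Real.cos θ ^ (m - 1) * (-Real.cos θ))
        + (↑m * (↑(m - 1) * Real.sin θ ^ (m - 1 - 1) * Real.cos θ) * Real.cos θ
          + ↑m * Real.sin θ ^ (m - 1) * (-Real.sin θ)) with hE1def
  have hu2 : HasDerivAt (fun x => d1 x * p * f x ^ (p - 1))
      ((E1 * p) * f θ ^ (p - 1)
        + (d1 θ * p) * (d1 θ * (p - 1) * f θ ^ (p - 1 - 1))) θ := by
    have hA : HasDerivAt (fun x => d1 x * p) (E1 * p) θ := hd1'.mul_const p
    have hB : HasDerivAt (fun x => f x ^ (p - 1)) (d1 θ * (p - 1) * f θ ^ (p - 1 - 1)) θ :=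
      (hfd θ).rpow_const (Or.inl (hfpos θ).ne')
    exact hA.mul hB
  have hdd : deriv (deriv (fun x => f x ^ p)) θ =
      (E1 * p) * f θ ^ (p - 1) + (d1 θ * p) * (d1 θ * (p - 1) * f θ ^ (p - 1 - 1)) := by
    rw [hderiv1]; exact hu2.deriv
  rw [show (fun x => (Real.cos x ^ (2 * n) + Real.sin x ^ (2 * n)) ^ ((1:ℝ) / (2 * n)))
      = fun x => f x ^ p from rfl]
  rw [hdd]
  -- set up abbreviations for the algebra
  set k : ℕ := 2 * n - 2 with hkdef
  have hm2 : m = k + 2 := by omega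
  have hm1 : m - 1 = k + 1 := by omega
  have hm11 : m - 1 - 1 = k := by omega
  have hk2 : (2 * n - 2 : ℕ) = k := rfl
  have h4n : (4 * n - 1 : ℕ) = 2 * k + 3 := by omega
  set s : ℝ := Real.sin θ
  set c : ℝ := Real.cos θ
  have hpyth : s ^ 2 + c ^ 2 = 1 := Real.sin_sq_add_cos_sq θ
  set F : ℝ := f θ with hF
  have hFpos : 0 < F := hfpos θ
  have hcastm : ((m : ℕ) : ℝ) = (k : ℝ) + 2 := by rw [hm2]; push_cast; ring
  have hcastm1 : ((m - 1 : ℕ) : ℝ) = (k : ℝ) + 1 := by rw [hm1]; push_cast; ring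
  have hp : p = 1 / ((k : ℝ) + 2) := by
    rw [hpdef]
    have : (2 : ℝ) * n = (k : ℝ) + 2 := by
      have : (k : ℝ) = 2 * n - 2 := by
        rw [hkdef]; push_cast [Nat.cast_sub (by omega : 2 ≤ 2 * n)]; ring
      rw [this]; ring
    rw [this]
  have h2n1 : (2 * (n:ℝ) - 1) = (k : ℝ) + 1 := by
    have : (k : ℝ) = 2 * n - 2 := by
      rw [hkdef]; push_cast [Nat.cast_sub (by omega : 2 ≤ 2 * n)]; ring
    rw [this]; ring
  -- rewrite RHS denominator
  have hrpow : (F ^ p) ^ (4 * n - 1) = F ^ (2 - p) := by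
    rw [← Real.rpow_natCast (F ^ p) (4 * n - 1), ← Real.rpow_mul hFpos.le]
    congr 1
    rw [h4n, hp]
    push_cast
    field_simp
    ring
  rw [hrpow]
  rw [eq_div_iff (by positivity : F ^ (2 - p) ≠ 0)]
  have hFexpr : F = c ^ (k + 2) + s ^ (k + 2) := by
    rw [hF]; simp only [hfdef]; rw [hm2]
  have e0 : F ^ p * F ^ (2 - p) = F ^ 2 := by
    rw [← Real.rpow_add hFpos, ← Real.rpow_natCast F 2]
    norm_num
  have e1 : F ^ (p - 1) * F ^ (2 - p) = F := by
    rw [← Real.rpow_add hFpos]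
    norm_num
  have e2 : F ^ (p - 1 - 1) * F ^ (2 - p) = 1 := by
    rw [← Real.rpow_add hFpos]
    have : p - 1 - 1 + (2 - p) = 0 := by ring
    rw [this, Real.rpow_zero]
  have ha := aux_alg k s c hpyth
  have hpK : p * ((k : ℝ) + 2) = 1 := by
    rw [hp]; field_simp
  have key : F ^ 2 + (E1 * p) * F + (d1 θ * p) * (d1 θ * (p - 1)) = ((k : ℝ) + 1) * (s * c) ^ k := by
    simp only [hE1def, hd1def, hFexpr, hcastm, hcastm1, hm1, hm11]
    push_cast
    linear_combination (((k:ℝ) + 1) * (c ^ k * s ^ 2 + s ^ k * c ^ 2) * (c ^ (k+2) + s ^ (k+2))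
        - (c ^ (k+2) + s ^ (k+2)) ^ 2
        + (c ^ (k+1) * s - s ^ (k+1) * c) ^ 2 * (p * ((k:ℝ) + 2) - 1 - (k:ℝ))) * hpK
      + ((k:ℝ) + 1) * ha
  have hkcast : (k : ℝ) = 2 * (n : ℝ) - 2 := by
    rw [hkdef]; push_cast [Nat.cast_sub (by omega : 2 ≤ 2 * n)]; ring
  linear_combination e0 + (E1 * p) * e1 + ((d1 θ * p) * (d1 θ * (p - 1))) * e2 + key
    + ((s * c) ^ k) * h2n1 + 2 * (Real.cos θ ^ k * Real.sin θ ^ k) * hkcast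
end

section
/- Let n be a positive integer and 0 < α ≤ π/(2n). Then ∫_{cos(nα)}^1 dr/√(1-r^(2n)) = 2√n · (1/2)·∫₀^α (√n · sin(nθ))/√(1-cos^(2n)(nθ)) dθ. -/
open Real MeasureTheory Set

theorem stmt17 (n : ℕ) (hn : 0 < n) (α : ℝ) (hα0 : 0 < α) (hα1 : α ≤ π / (2 * n)) :
    ∫ r in (Real.cos (n * α))..1, 1 / Real.sqrt (1 - r ^ (2 * n)) =
      2 * Real.sqrt n *
        ((1 / 2) * ∫ θ in (0:ℝ)..α,
          (Real.sqrt n * Real.sin (n * θ)) / Real.sqrt (1 - Real.cos (n * θ) ^ (2 * n))) := by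
  have hn' : (0:ℝ) < n := Nat.cast_pos.mpr hn
  have hna : (n:ℝ) * α ≤ π / 2 := by
    have h := mul_le_mul_of_nonneg_left hα1 hn'.le
    have : (n:ℝ) * (π / (2 * n)) = π / 2 := by field_simp
    linarith
  have hπ : π / 2 ≤ π := by linarith [Real.pi_pos]
  set f : ℝ → ℝ := fun θ => Real.cos (n * θ) with hf
  set g : ℝ → ℝ := fun r => 1 / Real.sqrt (1 - r ^ (2 * n)) with hg
  have hmem : ∀ x ∈ Icc (0:ℝ) α, (n:ℝ) * x ∈ Icc 0 π := by
    intro x hx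
    constructor
    · exact mul_nonneg hn'.le hx.1
    · have : (n:ℝ) * x ≤ n * α := mul_le_mul_of_nonneg_left hx.2 hn'.le
      linarith
  -- strict antitonicity / injectivity
  have hanti : StrictAntiOn f (Icc 0 α) := by
    intro x hx y hy hxy
    exact Real.strictAntiOn_cos (hmem x hx) (hmem y hy)
      (by exact (mul_lt_mul_iff_right₀ hn').mpr hxy)
  have hinj : InjOn f (Icc 0 α) := hanti.injOn
  -- derivative
  have hderiv : ∀ x ∈ Icc (0:ℝ) α,
      HasDerivWithinAt f (-((n:ℝ) * Real.sin (n * x))) (Icc 0 α) x := by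
    intro x hx
    have h1 : HasDerivAt (fun θ : ℝ => (n:ℝ) * θ) (n:ℝ) x := by
      simpa using (hasDerivAt_id x).const_mul (n:ℝ)
    have h2 : HasDerivAt f (-Real.sin (n * x) * n) x :=
      (Real.hasDerivAt_cos ((n:ℝ) * x)).comp x h1
    have : HasDerivAt f (-((n:ℝ) * Real.sin (n * x))) x := by
      convert h2 using 1; ring
    exact this.hasDerivWithinAt
  -- image of Icc under f
  have hcont : ContinuousOn f (Icc 0 α) :=
    (Real.continuous_cos.comp (continuous_const.mul continuous_id)).continuousOn
  have himage : f '' Icc 0 α = Icc (Real.cos (n * α)) 1 := by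
    apply Subset.antisymm
    · rintro _ ⟨x, hx, rfl⟩
      constructor
      · rcases eq_or_lt_of_le hx.2 with h | h
        · simp [hf, h]
        · exact (hanti hx (⟨hx.1.trans hx.2, le_refl α⟩) h).le
      · exact Real.cos_le_one _
    · have := intermediate_value_Icc' hα0.le hcont
      simpa [hf] using this
  have hcos_le : Real.cos (n * α) ≤ 1 := Real.cos_le_one _
  -- change of variables
  have key := integral_image_eq_integral_abs_deriv_smul measurableSet_Icc hderiv hinj g
  rw [himage] at key
  have habs : ∀ x ∈ Icc (0:ℝ) α,
      |(-((n:ℝ) * Real.sin (n * x)))| = (n:ℝ) * Real.sin (n * x) := by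
    intro x hx
    rw [abs_neg, abs_of_nonneg]
    exact mul_nonneg hn'.le
      (Real.sin_nonneg_of_nonneg_of_le_pi (hmem x hx).1 (hmem x hx).2)
  -- LHS as set integral over Icc
  have hLHS : ∫ r in (Real.cos (n * α))..1, g r
      = ∫ r in Icc (Real.cos (n * α)) 1, g r := by
    rw [intervalIntegral.integral_of_le hcos_le, MeasureTheory.integral_Icc_eq_integral_Ioc]
  have hRHSint : ∫ x in Icc (0:ℝ) α, |(-((n:ℝ) * Real.sin (n * x)))| • g (f x)
      = ∫ θ in (0:ℝ)..α, ((n:ℝ) * Real.sin (n * θ)) * g (Real.cos (n * θ)) := by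
    rw [intervalIntegral.integral_of_le hα0.le, ← MeasureTheory.integral_Icc_eq_integral_Ioc]
    apply MeasureTheory.setIntegral_congr_fun measurableSet_Icc
    intro x hx
    simp only [smul_eq_mul, habs x hx, hf]
  have main : ∫ r in (Real.cos (n * α))..1, g r
      = ∫ θ in (0:ℝ)..α, ((n:ℝ) * Real.sin (n * θ)) * g (Real.cos (n * θ)) := by
    rw [hLHS, key, hRHSint]
  -- algebra on both sides
  have hsq : Real.sqrt n * Real.sqrt n = (n:ℝ) := Real.mul_self_sqrt hn'.le
  calc ∫ r in (Real.cos (n * α))..1, 1 / Real.sqrt (1 - r ^ (2 * n))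
      = ∫ θ in (0:ℝ)..α, ((n:ℝ) * Real.sin (n * θ)) * g (Real.cos (n * θ)) := main
    _ = (n:ℝ) * ∫ θ in (0:ℝ)..α, Real.sin (n * θ) * g (Real.cos (n * θ)) := by
        rw [← intervalIntegral.integral_const_mul]
        congr 1; ext θ; ring
    _ = 2 * Real.sqrt n * ((1 / 2) * ∫ θ in (0:ℝ)..α,
          (Real.sqrt n * Real.sin (n * θ)) / Real.sqrt (1 - Real.cos (n * θ) ^ (2 * n))) := by
        have : ∫ θ in (0:ℝ)..α,
            (Real.sqrt n * Real.sin (n * θ)) / Real.sqrt (1 - Real.cos (n * θ) ^ (2 * n))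
            = Real.sqrt n * ∫ θ in (0:ℝ)..α, Real.sin (n * θ) * g (Real.cos (n * θ)) := by
          rw [← intervalIntegral.integral_const_mul]
          congr 1; ext θ; simp [hg]; ring
        rw [this, ← mul_assoc]
        rw [show (2:ℝ) * Real.sqrt n * (1/2) = Real.sqrt n by ring, ← mul_assoc, hsq]
end

section
/- For every positive integer n, ∫₀¹ dv/(1+v^(2n))^(1/n) = 2^(-1/n) · ∫₀¹ dr/√(1-r^(2n)). -/
open Real

lemma siegel_hasDerivAt (n : ℕ) (hn : 0 < n) (x : ℝ) :
    HasDerivAt (fun y : ℝ => (2:ℝ) ^ ((1:ℝ)/n) * (y * (1 + y ^ (2*n)) ^ (-(1:ℝ)/n)))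
      ((2:ℝ) ^ ((1:ℝ)/n) * ((1 - x ^ (2*n)) * (1 + x ^ (2*n)) ^ (-(1:ℝ)/n - 1))) x := by
  have hnR : (n:ℝ) ≠ 0 := Nat.cast_ne_zero.mpr hn.ne'
  have hx2 : (0:ℝ) ≤ x ^ (2*n) := Even.pow_nonneg ⟨n, by ring⟩ x
  have hu : (0:ℝ) < 1 + x ^ (2*n) := by linarith
  have h1 : HasDerivAt (fun y : ℝ => 1 + y ^ (2*n)) (((2*n : ℕ) : ℝ) * x ^ (2*n - 1)) x := by
    simpa using (hasDerivAt_pow (2*n) x).const_add 1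
  have h2 := h1.rpow_const (p := -(1:ℝ)/n) (Or.inl hu.ne')
  have h3 := ((hasDerivAt_id x).mul h2).const_mul ((2:ℝ)^((1:ℝ)/n))
  refine h3.congr_deriv (Eq.symm ?_)
  have hx : x * x ^ (2*n - 1) = x ^ (2*n) := by
    rw [← pow_succ']
    congr 1
    omega
  have hup : (1 + x ^ (2*n)) ^ (-(1:ℝ)/n) =
      (1 + x ^ (2*n)) ^ (-(1:ℝ)/n - 1) * (1 + x ^ (2*n)) := by
    rw [← Real.rpow_add_one hu.ne', sub_add_cancel]
  rw [hup]
  rw [← hx]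
  push_cast
  field_simp
  simp only [id]
  ring

theorem stmt18 (n : ℕ) (hn : 0 < n) :
    ∫ v in (0:ℝ)..1, 1 / (1 + v ^ (2 * n)) ^ ((1:ℝ) / n) =
      (2:ℝ) ^ (-(1:ℝ) / n) * ∫ r in (0:ℝ)..1, 1 / Real.sqrt (1 - r ^ (2 * n)) := by
  have hnR : (n:ℝ) ≠ 0 := Nat.cast_ne_zero.mpr hn.ne'
  set φ : ℝ → ℝ := fun y => (2:ℝ)^((1:ℝ)/n) * (y * (1 + y ^ (2*n)) ^ (-(1:ℝ)/n)) with hφ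
  set ψ : ℝ → ℝ := fun y => (2:ℝ)^((1:ℝ)/n) * ((1 - y ^ (2*n)) * (1 + y ^ (2*n)) ^ (-(1:ℝ)/n - 1))
    with hψ
  have hD : ∀ x : ℝ, HasDerivAt φ (ψ x) x := fun x => siegel_hasDerivAt n hn x
  have hcont : Continuous φ := continuous_iff_continuousAt.mpr fun x => (hD x).continuousAt
  have hbase : ∀ x : ℝ, (0:ℝ) < 1 + x ^ (2*n) := by
    intro x
    have : (0:ℝ) ≤ x ^ (2*n) := Even.pow_nonneg ⟨n, by ring⟩ x
    linarith
  have hlt1 : ∀ x ∈ Set.Ioo (0:ℝ) 1, x ^ (2*n) < 1 := by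
    intro x hx
    exact pow_lt_one₀ hx.1.le hx.2 (by positivity)
  have hpos : ∀ x ∈ Set.Ioo (0:ℝ) 1, 0 < ψ x := by
    intro x hx
    have h1 : x ^ (2*n) < 1 := hlt1 x hx
    have h2 : (0:ℝ) < 1 - x ^ (2*n) := by linarith
    have h3 := hbase x
    rw [hψ]
    positivity
  have hmono : StrictMonoOn φ (Set.Icc 0 1) := by
    apply strictMonoOn_of_hasDerivWithinAt_pos (convex_Icc 0 1) hcont.continuousOn
      (f' := ψ)
    · intro x hx
      exact (hD x).hasDerivWithinAt
    · rw [interior_Icc]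
      exact hpos
  have hφ0 : φ 0 = 0 := by simp [hφ, hn.ne']
  have hφ1 : φ 1 = 1 := by
    rw [hφ]
    simp only [one_pow, one_mul]
    rw [show (1:ℝ) + 1 = 2 by norm_num, ← Real.rpow_add two_pos,
      show (1:ℝ)/n + -1/n = 0 by ring, Real.rpow_zero]
  have himg : φ '' Set.Ioo 0 1 = Set.Ioo 0 1 := by
    apply Set.Subset.antisymm
    · rintro _ ⟨x, hx, rfl⟩
      constructor
      · have := hmono (Set.left_mem_Icc.mpr zero_le_one) ⟨hx.1.le, hx.2.le⟩ hx.1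
        rwa [hφ0] at this
      · have := hmono ⟨hx.1.le, hx.2.le⟩ (Set.right_mem_Icc.mpr zero_le_one) hx.2
        rwa [hφ1] at this
    · have := intermediate_value_Ioo zero_le_one hcont.continuousOn
      rwa [hφ0, hφ1] at this
  have hinj : Set.InjOn φ (Set.Ioo 0 1) := hmono.injOn.mono Set.Ioo_subset_Icc_self
  have hchange := MeasureTheory.integral_image_eq_integral_abs_deriv_smul measurableSet_Ioo
    (fun x _ => (hD x).hasDerivWithinAt) hinj (fun r => 1 / Real.sqrt (1 - r ^ (2*n)))
  rw [himg] at hchange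
  have hpt : ∀ x ∈ Set.Ioo (0:ℝ) 1,
      |ψ x| • (1 / Real.sqrt (1 - (φ x) ^ (2*n))) =
        (2:ℝ)^((1:ℝ)/n) * (1 / (1 + x ^ (2*n)) ^ ((1:ℝ)/n)) := by
    intro x hx
    have hu := hbase x
    have h1 : x ^ (2*n) < 1 := hlt1 x hx
    have h2 : (0:ℝ) < 1 - x ^ (2*n) := by linarith
    have hpow : (φ x) ^ (2*n) = 4 * x ^ (2*n) / (1 + x ^ (2*n)) ^ 2 := by
      rw [hφ]
      simp only
      rw [mul_pow, mul_pow,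
        ← Real.rpow_natCast ((2:ℝ)^((1:ℝ)/n)) (2*n),
        ← Real.rpow_natCast ((1 + x ^ (2*n))^(-(1:ℝ)/n)) (2*n),
        ← Real.rpow_mul (by norm_num : (0:ℝ) ≤ 2),
        ← Real.rpow_mul hu.le]
      have e1 : (1:ℝ)/n * ((2*n:ℕ):ℝ) = 2 := by push_cast; field_simp
      have e2 : -(1:ℝ)/n * ((2*n:ℕ):ℝ) = -2 := by push_cast; field_simp
      rw [e1, e2, Real.rpow_two, show (-2:ℝ) = -(2:ℝ) by norm_num,
        Real.rpow_neg hu.le, Real.rpow_two]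
      field_simp
      ring
    have hsub : 1 - (φ x) ^ (2*n) = ((1 - x ^ (2*n)) / (1 + x ^ (2*n))) ^ 2 := by
      rw [hpow]
      field_simp
      ring
    have hsq : Real.sqrt (1 - (φ x) ^ (2*n)) = (1 - x ^ (2*n)) / (1 + x ^ (2*n)) := by
      rw [hsub, Real.sqrt_sq (by positivity)]
    rw [hsq, abs_of_pos (hpos x hx), smul_eq_mul, hψ]
    simp only
    have hup : (1 + x ^ (2*n)) ^ (-(1:ℝ)/n - 1) * (1 + x ^ (2*n)) =
        (1 + x ^ (2*n)) ^ (-(1:ℝ)/n) := by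
      rw [← Real.rpow_add_one hu.ne', sub_add_cancel]
    have hneg : (1 + x ^ (2*n)) ^ (-(1:ℝ)/n) = 1 / (1 + x ^ (2*n)) ^ ((1:ℝ)/n) := by
      rw [neg_div, Real.rpow_neg hu.le, one_div]
      exact (one_div _).symm
    rw [one_div_div, ← hneg, ← hup]
    field_simp
  have hint : ∫ x in Set.Ioo (0:ℝ) 1, |ψ x| • (1 / Real.sqrt (1 - (φ x) ^ (2*n))) =
      (2:ℝ)^((1:ℝ)/n) * ∫ x in Set.Ioo (0:ℝ) 1, 1 / (1 + x ^ (2*n)) ^ ((1:ℝ)/n) := by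
    rw [← MeasureTheory.integral_const_mul]
    exact MeasureTheory.setIntegral_congr_fun measurableSet_Ioo hpt
  rw [intervalIntegral.integral_of_le zero_le_one, intervalIntegral.integral_of_le zero_le_one,
    MeasureTheory.integral_Ioc_eq_integral_Ioo, MeasureTheory.integral_Ioc_eq_integral_Ioo]
  rw [hchange, hint, ← mul_assoc, ← Real.rpow_add two_pos,
    show -(1:ℝ)/n + 1/n = 0 by ring, Real.rpow_zero, one_mul]
end

section
/- For every positive integer n, ∫₀¹ dv/(1+v^(2n))^(1/n) = ∫₀¹ (1-x^(2n))^(1/(2n)) dx. -/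
open Real intervalIntegral Set

theorem stmt19 (n : ℕ) (hn : 0 < n) :
    ∫ v in (0:ℝ)..1, 1 / (1 + v ^ (2 * n)) ^ ((1:ℝ) / n) =
      ∫ x in (0:ℝ)..1, (1 - x ^ (2 * n)) ^ ((1:ℝ) / (2 * n)) := by
  have hkpos : 0 < 2 * n := by omega
  set k : ℕ := 2 * n with hk
  have hK0 : (0:ℝ) < (k : ℝ) := by exact_mod_cast hkpos
  set K : ℝ := (k : ℝ) with hKdef
  set e : ℝ := 1 / K with he
  have hepos : 0 < e := by positivity
  have heK : e * K = 1 := by rw [he]; field_simp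
  have hnR : (0:ℝ) < (n : ℝ) := by exact_mod_cast hn
  have hKn : K = 2 * (n : ℝ) := by rw [hKdef, hk]; push_cast; ring
  set c : ℝ := ((1:ℝ)/2) ^ e with hc
  have hc0 : 0 < c := Real.rpow_pos_of_pos (by norm_num) _
  have hck : c ^ k = 1/2 := by
    rw [hc, ← Real.rpow_natCast (((1:ℝ)/2) ^ e) k, ← Real.rpow_mul (by norm_num), ← hKdef,
      heK, Real.rpow_one]
  have hB : ∀ x ∈ uIcc (0:ℝ) c, (1:ℝ)/2 ≤ 1 - x ^ k := by
    intro x hx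
    rw [uIcc_of_le hc0.le] at hx
    have : x ^ k ≤ c ^ k := pow_le_pow_left₀ hx.1 hx.2 k
    rw [hck] at this; linarith
  have hx0mem : ∀ x ∈ uIcc (0:ℝ) c, 0 ≤ x := by
    intro x hx; rw [uIcc_of_le hc0.le] at hx; exact hx.1
  -- continuity of the key integrand on [0,c]
  have hIcont : ∀ p : ℝ, ContinuousOn (fun x : ℝ => (1 - x ^ k) ^ p) (uIcc (0:ℝ) c) := by
    intro p x hx
    have hne : (1 - x ^ k) ≠ 0 := by have := hB x hx; linarith
    exact ((continuousAt_const.sub (continuousAt_pow x k)).rpow_const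
      (Or.inl hne)).continuousWithinAt
  -- derivative of the inner polynomial
  have hpoly : ∀ x : ℝ, HasDerivAt (fun t : ℝ => 1 - t ^ k) (-(K * x ^ (k - 1))) x := by
    intro x
    simpa [hKdef] using (hasDerivAt_pow k x).const_sub 1
  have hxpow : ∀ x : ℝ, x * x ^ (k - 1) = x ^ k := by
    intro x
    rw [← pow_succ']
    congr 1
    omega
  ----------------------------------------------------------------
  -- Left side equals ∫ x in 0..c, (1 - x^k)^(e-1)
  ----------------------------------------------------------------
  have hfcont : Continuous fun v : ℝ => 1 / (1 + v ^ k) ^ ((1:ℝ) / n) := by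
    have hpos : ∀ v : ℝ, (0:ℝ) < 1 + v ^ k := by
      intro v
      have : (0:ℝ) ≤ v ^ k := by rw [hk]; exact (even_two_mul n).pow_nonneg v
      linarith
    exact continuous_const.div
      ((continuous_const.add (continuous_pow k)).rpow_const
        (fun v => Or.inl (ne_of_gt (hpos v))))
      (fun v => ne_of_gt (Real.rpow_pos_of_pos (hpos v) _))
  have hL : (∫ v in (0:ℝ)..1, 1 / (1 + v ^ k) ^ ((1:ℝ) / n)) =
      ∫ x in (0:ℝ)..c, (1 - x ^ k) ^ (e - 1) := by
    have hgderiv : ∀ x ∈ uIcc (0:ℝ) c,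
        HasDerivAt (fun t : ℝ => t * (1 - t ^ k) ^ (-e)) ((1 - x ^ k) ^ (-e - 1)) x := by
      intro x hx
      have hBx := hB x hx
      have hne : (1 - x ^ k) ≠ 0 := by linarith
      have h2 : HasDerivAt (fun t : ℝ => (1 - t ^ k) ^ (-e))
          (-e * (1 - x ^ k) ^ (-e - 1) * (-(K * x ^ (k - 1)))) x := by
        have := (Real.hasDerivAt_rpow_const (p := -e) (Or.inl hne)).comp x (hpoly x)
        simpa [Function.comp_def] using this
      have h3 : HasDerivAt (fun t : ℝ => t * (1 - t ^ k) ^ (-e)) _ x := (hasDerivAt_id x).mul h2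
      convert h3 using 1
      simp only [id, one_mul]
      have hrw : (1 - x ^ k) ^ (-e) = (1 - x ^ k) ^ (-e - 1) * (1 - x ^ k) := by
        rw [← Real.rpow_add_one hne]
        congr 1
        ring
      rw [hrw]
      have h4 : x * (-e * (1 - x ^ k) ^ (-e - 1) * -(K * x ^ (k - 1)))
          = (e * K) * (x ^ k * (1 - x ^ k) ^ (-e - 1)) := by
        rw [← hxpow x]; ring
      rw [h4, heK]
      ring
    have key := integral_comp_smul_deriv hgderiv (hIcont (-e - 1)) hfcont
    simp only [Function.comp] at key
    have hb0 : (0:ℝ) * (1 - 0 ^ k) ^ (-e) = 0 := by rw [zero_mul]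
    have hbc : c * (1 - c ^ k) ^ (-e) = 1 := by
      rw [hck]
      norm_num
      rw [hc, ← Real.rpow_add (by norm_num : (0:ℝ) < 1/2)]
      simp
    rw [hb0, hbc] at key
    rw [← key]
    apply integral_congr
    intro x hx
    have hBx := hB x hx
    have hpos : (0:ℝ) < 1 - x ^ k := by linarith
    have hne : (1 - x ^ k) ≠ 0 := ne_of_gt hpos
    simp only [smul_eq_mul]
    have hgk : (x * (1 - x ^ k) ^ (-e)) ^ k = x ^ k * (1 - x ^ k)⁻¹ := by
      rw [mul_pow, ← Real.rpow_natCast ((1 - x ^ k) ^ (-e)) k,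
        ← Real.rpow_mul hpos.le, ← hKdef]
      congr 1
      rw [show -e * K = -1 by rw [neg_mul, heK], Real.rpow_neg_one]
    rw [hgk]
    have h1 : 1 + x ^ k * (1 - x ^ k)⁻¹ = (1 - x ^ k)⁻¹ := by
      field_simp
      ring
    rw [h1]
    have h2 : ((1 - x ^ k)⁻¹) ^ ((1:ℝ) / n) = (1 - x ^ k) ^ (-((1:ℝ) / n)) := by
      rw [← Real.rpow_neg_one (1 - x ^ k), ← Real.rpow_mul hpos.le]
      congr 1
      ring
    rw [h2, Real.rpow_neg hpos.le, one_div, inv_inv, ← Real.rpow_add hpos]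
    congr 1
    rw [he, hKn]
    field_simp
    ring
  ----------------------------------------------------------------
  -- Right side equals ∫ x in 0..c, (1 - x^k)^(e-1)
  ----------------------------------------------------------------
  have hycont : Continuous fun t : ℝ => (1 - t ^ k) ^ e :=
    (continuous_const.sub (continuous_pow k)).rpow_const (fun x => Or.inr hepos.le)
  have hR : (∫ x in (0:ℝ)..1, (1 - x ^ k) ^ e) =
      ∫ x in (0:ℝ)..c, (1 - x ^ k) ^ (e - 1) := by
    have hyderiv : ∀ x ∈ uIcc (0:ℝ) c,
        HasDerivAt (fun t : ℝ => (1 - t ^ k) ^ e)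
          (e * (1 - x ^ k) ^ (e - 1) * (-(K * x ^ (k - 1)))) x := by
      intro x hx
      have hBx := hB x hx
      have hne : (1 - x ^ k) ≠ 0 := by linarith
      have := (Real.hasDerivAt_rpow_const (p := e) (Or.inl hne)).comp x (hpoly x)
      simpa [Function.comp_def] using this
    have hy'cont : ContinuousOn
        (fun x : ℝ => e * (1 - x ^ k) ^ (e - 1) * (-(K * x ^ (k - 1)))) (uIcc (0:ℝ) c) := by
      exact (continuousOn_const.mul (hIcont (e - 1))).mul
        ((continuousOn_const.mul (continuousOn_pow (k - 1))).neg)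
    have key := integral_comp_smul_deriv hyderiv hy'cont hycont
    simp only [Function.comp] at key
    have hb0 : (1 - (0:ℝ) ^ k) ^ e = 1 := by
      rw [zero_pow hkpos.ne', sub_zero, Real.one_rpow]
    have hbc : (1 - c ^ k) ^ e = c := by
      rw [hck, hc]; norm_num
    rw [hb0, hbc] at key
    -- key : ∫ x in 0..c, deriv • y(y x) = ∫ v in 1..c, y v
    have hc1int : ∫ x in c..(1:ℝ), (1 - x ^ k) ^ e
        = ∫ x in (0:ℝ)..c, x ^ k * (1 - x ^ k) ^ (e - 1) := by
      rw [integral_symm 1 c, ← key, ← integral_neg]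
      apply integral_congr
      intro x hx
      have hBx := hB x hx
      have hpos : (0:ℝ) < 1 - x ^ k := by linarith
      have hx0 : 0 ≤ x := hx0mem x hx
      have hyy : (1 - ((1 - x ^ k) ^ e) ^ k) ^ e = x := by
        rw [← Real.rpow_natCast ((1 - x ^ k) ^ e) k, ← Real.rpow_mul hpos.le, ← hKdef,
          heK, Real.rpow_one, sub_sub_cancel, ← Real.rpow_natCast x k,
          ← Real.rpow_mul hx0, ← hKdef, mul_comm, heK, Real.rpow_one]
      simp only [smul_eq_mul]
      rw [hyy]
      have h4 : -(e * (1 - x ^ k) ^ (e - 1) * -(K * x ^ (k - 1)) * x)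
          = (e * K) * (x ^ k * (1 - x ^ k) ^ (e - 1)) := by
        rw [← hxpow x]; ring
      rw [h4, heK, one_mul]
    have hint1 : IntervalIntegrable (fun t : ℝ => (1 - t ^ k) ^ e) MeasureTheory.volume 0 c :=
      hycont.intervalIntegrable _ _
    have hint2 : IntervalIntegrable (fun t : ℝ => (1 - t ^ k) ^ e) MeasureTheory.volume c 1 :=
      hycont.intervalIntegrable _ _
    have hint3 : IntervalIntegrable (fun x : ℝ => x ^ k * (1 - x ^ k) ^ (e - 1))
        MeasureTheory.volume 0 c :=
      ((continuousOn_pow k).mul (hIcont (e - 1))).intervalIntegrable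
    rw [← integral_add_adjacent_intervals hint1 hint2, hc1int,
      ← integral_add hint1 hint3]
    apply integral_congr
    intro x hx
    have hBx := hB x hx
    have hpos : (0:ℝ) < 1 - x ^ k := by linarith
    have hne : (1 - x ^ k) ≠ 0 := ne_of_gt hpos
    simp only [Pi.add_apply]
    have hrw : (1 - x ^ k) ^ e = (1 - x ^ k) ^ (e - 1) * (1 - x ^ k) := by
      rw [← Real.rpow_add_one hne]
      congr 1
      ring
    rw [hrw]
    ring
  ----------------------------------------------------------------
  have hee : (1:ℝ) / (2 * (n : ℝ)) = e := by rw [he, hKn]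
  rw [hee, hL, hR]
end
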